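/- arXiv:1103.0495 — 7 statements merged into one kernel-verified Lean document; each statement's English description precedes it below -/
import Mathlib

section
/- For every u₁ > 0 and every k with 2 ≤ k ≤ n, the following hold: (i) U_k(u₁) − U_{k−1}(u₁) = h²(½g₁(u₁) + Σ_{j=2}^{k−1} g₁(U_j(u₁))) > 0; (ii) U_k(u₁) = u₁ + h²(((k−1)/2)g₁(u₁) + Σ_{j=2}^{k−1}(k−j)g₁(U_j(u₁))) > 0; (iii) U_k′(u₁) − U_{k−1}′(u₁) = h²(½g₁′(u₁) + Σ_{j=2}^{k−1} g₁′(U_j(u₁))U_j′(u₁)) > 0; (iv) U_k′(u₁) = 1 + h²(((k−1)/2)g₁′(u₁) + Σ_{j=2}^{k−1}(k−j)g₁′(U_j(u₁))U_j′(u₁)) > 1, where ′ denotes the derivative with respect to u₁. -/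
/-!
By the recursion, the first differences `U_{k+1} - U_k` start at `(h²/2) g₁(u₁)` and grow by
`h² g₁(U_k)` at each step, so they are partial sums of these terms; summing once more gives the
weighted closed form. Differentiating in `u₁` gives the same recursion for `U_k'`, with `g₁(U_j)`
replaced by `g₁'(U_j) U_j'`. Since `g₁` and `g₁'` are positive on `(0, ∞)`, positivity propagates
along both recursions by induction.
-/

noncomputable section

/-- `Useq g1 h k` is the function `U_{k+1}` (0-indexed version of the recursion). -/
def Useq (g1 : ℝ → ℝ) (h : ℝ) : ℕ → ℝ → ℝ
  | 0 => fun x => x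
  | 1 => fun x => x + h ^ 2 / 2 * g1 x
  | k + 2 => fun x =>
      2 * Useq g1 h (k + 1) x - Useq g1 h k x + h ^ 2 * g1 (Useq g1 h (k + 1) x)

/-- `discU g1 h k` is the function `U_k` from the paper, for `1 ≤ k`. -/
def discU (g1 : ℝ → ℝ) (h : ℝ) (k : ℕ) : ℝ → ℝ := Useq g1 h (k - 1)

/-- The function `A(u₁)` from the paper. -/
def discA (g1 g2 : ℝ → ℝ) (h : ℝ) (n : ℕ) (x : ℝ) : ℝ :=
  ((discU g1 h n x - discU g1 h (n - 1) x) / h + h / 2 * g1 (discU g1 h n x)) /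
    g2 (discU g1 h n x)

/-- `(u₁, …, u_n)` (encoded as `u : ℕ → ℝ` on indices `1,…,n`) is a positive solution of
the discrete system `(Sα)`. -/
def IsSolution (g1 g2 : ℝ → ℝ) (n : ℕ) (h α : ℝ) (u : ℕ → ℝ) : Prop :=
  (∀ k, 1 ≤ k → k ≤ n → 0 < u k) ∧
  u 2 - u 1 = h ^ 2 / 2 * g1 (u 1) ∧
  (∀ k, 2 ≤ k → k ≤ n - 1 → u (k + 1) - 2 * u k + u (k - 1) = h ^ 2 * g1 (u k)) ∧
  u n - u (n - 1) = -(h ^ 2 / 2) * g1 (u n) + h * α * g2 (u n)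

/-- `G₁`, the primitive of `g₁` vanishing at `0`. -/
def primG1 (g1 : ℝ → ℝ) (x : ℝ) : ℝ := ∫ t in (0:ℝ)..x, g1 t

/-- `g := g₁/g₂`. -/
def gg (g1 g2 : ℝ → ℝ) (x : ℝ) : ℝ := g1 x / g2 x

/-- `G := G₁/g₂²`. -/
def GG (g1 g2 : ℝ → ℝ) (x : ℝ) : ℝ := primG1 g1 x / (g2 x) ^ 2

/-- The trapezoidal-rule error `E` as a function of `u₁`. -/
def trapError (g1 : ℝ → ℝ) (h : ℝ) (n : ℕ) (x : ℝ) : ℝ :=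
  (∑ k ∈ Finset.Icc 1 (n - 1),
    (g1 (discU g1 h k x) + g1 (discU g1 h (k + 1) x)) / 2 *
      (discU g1 h (k + 1) x - discU g1 h k x)) -
  (primG1 g1 (discU g1 h n x) - primG1 g1 (discU g1 h 1 x))

/-- The Jacobian matrix `J(α,u)` of the system `(Sα)`. -/
def Jmat (g1 g2 : ℝ → ℝ) (n : ℕ) (h α : ℝ) (u : ℕ → ℝ) : Matrix (Fin n) (Fin n) ℝ :=
  Matrix.of fun i j =>
    if i = j then
      (if (i : ℕ) = 0 then 1 + h ^ 2 / 2 * deriv g1 (u 1)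
       else if (i : ℕ) = n - 1 then
         1 + h ^ 2 / 2 * deriv g1 (u n) - h * α * deriv g2 (u n)
       else 2 + h ^ 2 * deriv g1 (u ((i : ℕ) + 1)))
    else if (i : ℕ) + 1 = (j : ℕ) ∨ (j : ℕ) + 1 = (i : ℕ) then -1 else 0

open Finset

theorem Finset.sum_Icc_eq_sum_Icc_pred_add {M : Type*} [AddCommMonoid M] {a k : ℕ}
    (hk : 0 < k) (hak : a ≤ k) (f : ℕ → M) :
    ∑ j ∈ Icc a k, f j = ∑ j ∈ Icc a (k - 1), f j + f k := by
  obtain ⟨m, rfl⟩ := Nat.exists_eq_add_of_le' hk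
  rw [Nat.add_sub_cancel]
  exact sum_Icc_succ_top hak f

structure SecondDifferenceEq (c : ℝ) (a b : ℕ → ℝ) : Prop where
  base : a 2 - a 1 = c / 2 * b 1
  succ : ∀ k, 2 ≤ k → a (k + 1) = 2 * a k - a (k - 1) + c * b k

namespace SecondDifferenceEq

variable {a b : ℕ → ℝ} {c : ℝ}

theorem sub_pred_eq (ha : SecondDifferenceEq c a b) {k : ℕ} (hk : 2 ≤ k) :
    a k - a (k - 1) = c * (b 1 / 2 + ∑ j ∈ Icc 2 (k - 1), b j) := by
  induction k, hk using Nat.le_induction with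
  | base =>
    rw [ha.base, Icc_eq_empty_of_lt (by norm_num), sum_empty]
    ring
  | succ k hk ih =>
    rw [Nat.add_sub_cancel, sum_Icc_eq_sum_Icc_pred_add (by omega) hk, ha.succ k hk]
    linear_combination ih

theorem eq_add_sum (ha : SecondDifferenceEq c a b) {k : ℕ} (hk : 2 ≤ k) :
    a k = a 1 + c * (((k : ℝ) - 1) / 2 * b 1 + ∑ j ∈ Icc 2 (k - 1), ((k : ℝ) - j) * b j) := by
  induction k, hk using Nat.le_induction with
  | base =>
    rw [Icc_eq_empty_of_lt (by norm_num), sum_empty]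
    push_cast
    linear_combination ha.base
  | succ k hk ih =>
    have hsum : ∑ j ∈ Icc 2 k, ((↑(k + 1) : ℝ) - j) * b j =
        ∑ j ∈ Icc 2 (k - 1), ((k : ℝ) - j) * b j + ∑ j ∈ Icc 2 k, b j := by
      simp only [Nat.cast_add, Nat.cast_one, add_sub_right_comm, add_one_mul, sum_add_distrib]
      rw [sum_Icc_eq_sum_Icc_pred_add (by omega) hk (fun j => ((k : ℝ) - j) * b j), sub_self,
        zero_mul, add_zero]
    have hdiff := ha.sub_pred_eq (k := k + 1) (by omega)
    rw [Nat.add_sub_cancel] at hdiff ⊢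
    rw [hsum]
    push_cast
    linear_combination ih + hdiff

theorem pos (ha : SecondDifferenceEq c a b) (hc : 0 < c) (ha1 : 0 < a 1)
    (hb : ∀ j, 1 ≤ j → 0 < a j → 0 < b j) {k : ℕ} (hk : 1 ≤ k) : 0 < a k := by
  suffices ∀ k, 1 ≤ k → 0 < a k ∧ a k < a (k + 1) from (this k hk).1
  intro k hk
  induction k, hk using Nat.le_induction with
  | base => exact ⟨ha1, by nlinarith [ha.base, hb 1 le_rfl ha1]⟩
  | succ k hk ih =>
    have hak : 0 < a (k + 1) := ih.1.trans ih.2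
    have hsucc := ha.succ (k + 1) (by omega)
    rw [Nat.add_sub_cancel] at hsucc
    exact ⟨hak, by nlinarith [hb (k + 1) (by omega) hak]⟩

theorem sub_pred_pos (ha : SecondDifferenceEq c a b) (hc : 0 < c) (hb : ∀ j, 1 ≤ j → 0 < b j)
    {k : ℕ} (hk : 2 ≤ k) : 0 < a k - a (k - 1) := by
  have : 0 ≤ ∑ j ∈ Icc 2 (k - 1), b j :=
    sum_nonneg fun j hj => (hb j (by linarith [(mem_Icc.mp hj).1])).le
  rw [ha.sub_pred_eq hk]
  have := hb 1 le_rfl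
  positivity

theorem lt_of_two_le (ha : SecondDifferenceEq c a b) (hc : 0 < c) (hb : ∀ j, 1 ≤ j → 0 < b j)
    {k : ℕ} (hk : 2 ≤ k) : a 1 < a k := by
  have hsum : 0 ≤ ∑ j ∈ Icc 2 (k - 1), ((k : ℝ) - j) * b j := by
    refine sum_nonneg fun j hj => ?_
    obtain ⟨hj2, hjk⟩ := mem_Icc.mp hj
    have hjk' : (j : ℝ) ≤ k := by exact_mod_cast (by omega : j ≤ k)
    exact mul_nonneg (sub_nonneg.mpr hjk') (hb j (by omega)).le
  have hk' : (0 : ℝ) < (k : ℝ) - 1 := by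
    rw [sub_pos]; exact_mod_cast hk
  rw [ha.eq_add_sum hk, lt_add_iff_pos_right]
  have := hb 1 le_rfl
  positivity

end SecondDifferenceEq

theorem pos_of_deriv_pos {f : ℝ → ℝ} (hf : ContinuousOn f (Set.Ici 0)) (hf0 : f 0 = 0)
    (hf' : ∀ x > (0 : ℝ), 0 < deriv f x) {x : ℝ} (hx : 0 < x) : 0 < f x := by
  have hmono := strictMonoOn_of_deriv_pos (convex_Ici 0) hf (by simpa using hf')
  simpa [hf0] using hmono Set.self_mem_Ici hx.le hx

section discU

variable {g1 : ℝ → ℝ} {h : ℝ}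

theorem discU_succ {k : ℕ} (hk : 2 ≤ k) (x : ℝ) :
    discU g1 h (k + 1) x =
      2 * discU g1 h k x - discU g1 h (k - 1) x + h ^ 2 * g1 (discU g1 h k x) := by
  obtain ⟨m, rfl⟩ := Nat.exists_eq_add_of_le' hk
  rfl

theorem secondDifferenceEq_discU (x : ℝ) :
    SecondDifferenceEq (h ^ 2) (fun j => discU g1 h j x) (fun j => g1 (discU g1 h j x)) where
  base := by
    show x + h ^ 2 / 2 * g1 x - x = h ^ 2 / 2 * g1 x
    ring
  succ _ hk := discU_succ hk x

theorem differentiable_useq (hg : Differentiable ℝ g1) : ∀ m, Differentiable ℝ (Useq g1 h m)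
  | 0 => differentiable_id
  | 1 => differentiable_id.add (hg.const_mul _)
  | m + 2 => (((differentiable_useq hg (m + 1)).const_mul 2).sub
      (differentiable_useq hg m)).add ((hg.comp (differentiable_useq hg (m + 1))).const_mul _)

theorem discU_one (x : ℝ) : discU g1 h 1 x = x :=
  rfl

theorem deriv_discU_one (x : ℝ) : deriv (discU g1 h 1) x = 1 :=
  deriv_id x

theorem deriv_discU_succ (hg : Differentiable ℝ g1) {k : ℕ} (hk : 2 ≤ k) (x : ℝ) :
    deriv (discU g1 h (k + 1)) x =
      2 * deriv (discU g1 h k) x - deriv (discU g1 h (k - 1)) x +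
        h ^ 2 * (deriv g1 (discU g1 h k x) * deriv (discU g1 h k) x) := by
  have hU := (differentiable_useq (h := h) hg (k - 1) x).hasDerivAt
  have hU' := (differentiable_useq (h := h) hg (k - 1 - 1) x).hasDerivAt
  rw [funext (discU_succ hk)]
  exact (((hU.const_mul 2).sub hU').add (((hg _).hasDerivAt.comp x hU).const_mul _)).deriv

theorem secondDifferenceEq_deriv_discU (hg : Differentiable ℝ g1) (x : ℝ) :
    SecondDifferenceEq (h ^ 2) (fun j => deriv (discU g1 h j) x)
      (fun j => deriv g1 (discU g1 h j x) * deriv (discU g1 h j) x) where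
  base := by
    have hU : HasDerivAt (discU g1 h 2) (1 + h ^ 2 / 2 * deriv g1 x) x :=
      (hasDerivAt_id x).add ((hg x).hasDerivAt.const_mul _)
    rw [hU.deriv, deriv_discU_one, discU_one]
    ring
  succ _ hk := deriv_discU_succ hg hk x

end discU

theorem stmt_0_general (n : ℕ) (h : ℝ) (hh : h = 1 / ((n : ℝ) - 1))
    (g1 : ℝ → ℝ) (hg1C : ContDiff ℝ 3 g1) (hg10 : g1 0 = 0)
    (hg1d : ∀ x > (0:ℝ), 0 < deriv g1 x) :
    ∀ u1 : ℝ, 0 < u1 → ∀ k, 2 ≤ k → k ≤ n →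
      (discU g1 h k u1 - discU g1 h (k - 1) u1 =
          h ^ 2 * (g1 u1 / 2 + ∑ j ∈ Finset.Icc 2 (k - 1), g1 (discU g1 h j u1)) ∧
        0 < discU g1 h k u1 - discU g1 h (k - 1) u1) ∧
      (discU g1 h k u1 =
          u1 + h ^ 2 * (((k : ℝ) - 1) / 2 * g1 u1 +
            ∑ j ∈ Finset.Icc 2 (k - 1), ((k : ℝ) - (j : ℝ)) * g1 (discU g1 h j u1)) ∧
        0 < discU g1 h k u1) ∧
      (deriv (discU g1 h k) u1 - deriv (discU g1 h (k - 1)) u1 =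
          h ^ 2 * (deriv g1 u1 / 2 +
            ∑ j ∈ Finset.Icc 2 (k - 1),
              deriv g1 (discU g1 h j u1) * deriv (discU g1 h j) u1) ∧
        0 < deriv (discU g1 h k) u1 - deriv (discU g1 h (k - 1)) u1) ∧
      (deriv (discU g1 h k) u1 =
          1 + h ^ 2 * (((k : ℝ) - 1) / 2 * deriv g1 u1 +
            ∑ j ∈ Finset.Icc 2 (k - 1),
              ((k : ℝ) - (j : ℝ)) * deriv g1 (discU g1 h j u1) * deriv (discU g1 h j) u1) ∧
        1 < deriv (discU g1 h k) u1) := by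
  intro u1 hu1 k hk hkn
  have hc : 0 < h ^ 2 := by
    have : (2 : ℝ) ≤ n := by exact_mod_cast hk.trans hkn
    have : 0 < (n : ℝ) - 1 := by linarith
    rw [hh]
    positivity
  have hg : Differentiable ℝ g1 := hg1C.differentiable (by norm_num)
  have hU := secondDifferenceEq_discU (g1 := g1) (h := h) u1
  have hV := secondDifferenceEq_deriv_discU (h := h) hg u1
  have hg1pos : ∀ x > (0 : ℝ), 0 < g1 x :=
    fun _ => pos_of_deriv_pos hg.continuous.continuousOn hg10 hg1d
  have hUpos : ∀ j, 1 ≤ j → 0 < discU g1 h j u1 :=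
    fun j => hU.pos hc hu1 fun _ _ => hg1pos _
  have hVpos : ∀ j, 1 ≤ j → 0 < deriv (discU g1 h j) u1 :=
    fun j => hV.pos hc (by simp [deriv_discU_one]) fun i hi hVi =>
      mul_pos (hg1d _ (hUpos i hi)) hVi
  have hgU : ∀ j, 1 ≤ j → 0 < g1 (discU g1 h j u1) := fun j hj => hg1pos _ (hUpos j hj)
  have hg'V : ∀ j, 1 ≤ j → 0 < deriv g1 (discU g1 h j u1) * deriv (discU g1 h j) u1 :=
    fun j hj => mul_pos (hg1d _ (hUpos j hj)) (hVpos j hj)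
  have hVdiff := hV.sub_pred_eq hk
  have hVeq := hV.eq_add_sum hk
  have hV1 := hV.lt_of_two_le hc hg'V hk
  simp only [deriv_discU_one, discU_one, mul_one, ← mul_assoc] at hVdiff hVeq hV1
  exact ⟨⟨hU.sub_pred_eq hk, hU.sub_pred_pos hc hgU hk⟩, ⟨hU.eq_add_sum hk, hUpos k (by omega)⟩,
    ⟨hVdiff, hV.sub_pred_pos hc hg'V hk⟩, hVeq, hV1⟩

theorem stmt_0 (n : ℕ) (hn : 2 ≤ n) (h : ℝ) (hh : h = 1 / ((n : ℝ) - 1))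
    (g1 g2 : ℝ → ℝ)
    (hg1C : ContDiff ℝ 3 g1) (hg2C : ContDiff ℝ 3 g2)
    (hg10 : g1 0 = 0) (hg20 : g2 0 = 0)
    (hg1d : ∀ x > (0:ℝ), 0 < deriv g1 x) (hg2d : ∀ x > (0:ℝ), 0 < deriv g2 x)
    (hg1dd : ∀ x > (0:ℝ), 0 < deriv (deriv g1) x)
    (hg2dd : ∀ x > (0:ℝ), 0 < deriv (deriv g2) x)
    (hg1ddd : ∀ x > (0:ℝ), 0 ≤ deriv (deriv (deriv g1)) x)
    (hg2ddd : ∀ x > (0:ℝ), 0 ≤ deriv (deriv (deriv g2)) x) :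
    ∀ u1 : ℝ, 0 < u1 → ∀ k, 2 ≤ k → k ≤ n →
      (discU g1 h k u1 - discU g1 h (k - 1) u1 =
          h ^ 2 * (g1 u1 / 2 + ∑ j ∈ Finset.Icc 2 (k - 1), g1 (discU g1 h j u1)) ∧
        0 < discU g1 h k u1 - discU g1 h (k - 1) u1) ∧
      (discU g1 h k u1 =
          u1 + h ^ 2 * (((k : ℝ) - 1) / 2 * g1 u1 +
            ∑ j ∈ Finset.Icc 2 (k - 1), ((k : ℝ) - (j : ℝ)) * g1 (discU g1 h j u1)) ∧
        0 < discU g1 h k u1) ∧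
      (deriv (discU g1 h k) u1 - deriv (discU g1 h (k - 1)) u1 =
          h ^ 2 * (deriv g1 u1 / 2 +
            ∑ j ∈ Finset.Icc 2 (k - 1),
              deriv g1 (discU g1 h j u1) * deriv (discU g1 h j) u1) ∧
        0 < deriv (discU g1 h k) u1 - deriv (discU g1 h (k - 1)) u1) ∧
      (deriv (discU g1 h k) u1 =
          1 + h ^ 2 * (((k : ℝ) - 1) / 2 * deriv g1 u1 +
            ∑ j ∈ Finset.Icc 2 (k - 1),
              ((k : ℝ) - (j : ℝ)) * deriv g1 (discU g1 h j u1) * deriv (discU g1 h j) u1) ∧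
        1 < deriv (discU g1 h k) u1) :=
  stmt_0_general n h hh g1 hg1C hg10 hg1d
end
end

section
/- For every u₁ > 0 and every k with 2 ≤ k ≤ n, the following hold, where all derivatives are with respect to u₁: (i) the derivative of u₁ ↦ (U_k(u₁) − U_{k−1}(u₁))/g₁(U_k(u₁)) is strictly negative; (ii) the derivative of u₁ ↦ (U_k(u₁) − U₁(u₁))/g₁(U_k(u₁)) is strictly negative; (iii) the derivative of u₁ ↦ (U_k(u₁) − U_{k−1}(u₁))/(U_k(u₁) − U₁(u₁)) is nonnegative; (iv) the derivative of u₁ ↦ g₁(U_k(u₁))/g₁(U₁(u₁)) is strictly positive. -/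
noncomputable section

/-!
Write `D_k = U_{k+1} - U_k`, let `'` denote `d/du₁`, and compare logarithmic derivatives `f'/f` of
positive functions: each of (i)–(iv) says that the logarithmic derivative of a numerator is below,
or above, that of its denominator. Since `D_{k+1} = D_k + h² g₁(U_{k+1})` and
`U_{k+1} - U_1 = D_1 + ⋯ + D_k`, and the logarithmic derivative of a sum of positive functions is
a mediant of theirs, an induction shows that `D_k'/D_k` starts at `g₁'(u₁)/g₁(u₁)`, increases with
`k` and stays below `(g₁ ∘ U_{k+1})'/(g₁ ∘ U_{k+1})`. The one step that is not a mediant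
comparison is that `g₁/g₁'` grows with slope less than one, which is the strict convexity of `g₁`.
-/
open Set

theorem div_le_add_div_add {a b c d : ℝ} (hb : 0 < b) (hd : 0 < d) (h : a / b ≤ c / d) :
    a / b ≤ (a + c) / (b + d) := by
  rw [div_le_div_iff₀ hb hd] at h
  rw [div_le_div_iff₀ hb (add_pos hb hd)]
  nlinarith

theorem add_div_add_le_div {a b c d : ℝ} (hb : 0 < b) (hd : 0 < d) (h : a / b ≤ c / d) :
    (a + c) / (b + d) ≤ c / d := by
  rw [div_le_div_iff₀ hb hd] at h
  rw [div_le_div_iff₀ (add_pos hb hd) hd]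
  nlinarith

theorem div_lt_add_div_add {a b c d : ℝ} (hb : 0 < b) (hd : 0 < d) (h : a / b < c / d) :
    a / b < (a + c) / (b + d) := by
  rw [div_lt_div_iff₀ hb hd] at h
  rw [div_lt_div_iff₀ hb (add_pos hb hd)]
  nlinarith

theorem strictMono_of_sub_lt_sub {a : ℕ → ℝ} (h01 : a 0 < a 1)
    (hstep : ∀ m, a 0 < a (m + 1) → a (m + 1) - a m < a (m + 2) - a (m + 1)) :
    StrictMono a := by
  have key : ∀ m, a 0 < a (m + 1) ∧ a m < a (m + 1) := by
    intro m
    induction m with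
    | zero => exact ⟨h01, h01⟩
    | succ m ih =>
      have := hstep m ih.1
      exact ⟨ih.1.trans (by linarith), by linarith⟩
  exact strictMono_nat_of_lt_succ fun m => (key m).2

theorem pos_of_deriv_pos_s1 {g : ℝ → ℝ} (hg : Continuous g) (hg0 : g 0 = 0)
    (hg' : ∀ x > 0, 0 < deriv g x) {y : ℝ} (hy : 0 < y) : 0 < g y :=
  hg0 ▸ strictMonoOn_of_deriv_pos (convex_Ici 0) hg.continuousOn
    (by rw [interior_Ici]; exact fun x hx => hg' x hx) self_mem_Ici hy.le hy

theorem deriv_div_eq_div_mul_sub {f g : ℝ → ℝ} {f' g' x : ℝ} (hf : HasDerivAt f f' x)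
    (hg : HasDerivAt g g' x) (hf0 : f x ≠ 0) (hg0 : g x ≠ 0) :
    deriv (fun y => f y / g y) x = f x / g x * (f' / f x - g' / g x) := by
  rw [(hf.fun_div hg hg0).deriv]
  field_simp

theorem StrictConvexOn.div_deriv_lt_div_deriv_add {g : ℝ → ℝ} (hg : Differentiable ℝ g)
    (hconv : StrictConvexOn ℝ (Ioi 0) g) (hg_pos : ∀ y > 0, 0 < g y)
    (hg'_pos : ∀ y > 0, 0 < deriv g y) {a b : ℝ} (ha : 0 < a) (hab : a < b) :
    g b / deriv g b < g a / deriv g a + (b - a) := by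
  have hb : 0 < b := ha.trans hab
  have hslope : g b - g a < deriv g b * (b - a) := by
    have := hconv.slope_lt_deriv ha hb hab (hg b)
    rw [slope_def_field, div_lt_iff₀ (sub_pos.2 hab)] at this
    exact this
  have hmono : deriv g a < deriv g b :=
    hconv.strictMonoOn_deriv (fun y _ => hg y) ha hb hab
  calc g b / deriv g b < (g a + deriv g b * (b - a)) / deriv g b := by
        gcongr
        · exact hg'_pos b hb
        · linarith
    _ = g a / deriv g b + (b - a) := by field_simp [(hg'_pos b hb).ne']
    _ ≤ g a / deriv g a + (b - a) := by
        gcongr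
        · exact (hg_pos a ha).le
        · exact hg'_pos a ha

theorem StrictConvexOn.div_lt_deriv_mul_div_add_of_le {g : ℝ → ℝ} (hg : Differentiable ℝ g)
    (hconv : StrictConvexOn ℝ (Ioi 0) g) (hg_pos : ∀ y > 0, 0 < g y)
    (hg'_pos : ∀ y > 0, 0 < deriv g y) {a D V W : ℝ} (ha : 0 < a) (hD : 0 < D)
    (hVW : 0 < V + W) (hle : W / D ≤ deriv g a * V / g a) :
    W / D < deriv g (a + D) * (V + W) / g (a + D) := by
  have hψ : ∀ y > 0, 0 < g y / deriv g y := fun y hy => div_pos (hg_pos y hy) (hg'_pos y hy)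
  have hle' : W / D ≤ V / (g a / deriv g a) := by rwa [div_div_eq_mul_div, mul_comm]
  calc W / D ≤ (W + V) / (D + g a / deriv g a) := div_le_add_div_add hD (hψ a ha) hle'
    _ = (V + W) / (g a / deriv g a + D) := by ring
    _ < (V + W) / (g (a + D) / deriv g (a + D)) := by
        gcongr
        · exact hψ _ (by linarith)
        · simpa using hconv.div_deriv_lt_div_deriv_add hg hg_pos hg'_pos ha
            (lt_add_of_pos_right a hD)
    _ = deriv g (a + D) * (V + W) / g (a + D) := by rw [div_div_eq_mul_div, mul_comm]

def UseqDeriv (g : ℝ → ℝ) (h : ℝ) : ℕ → ℝ → ℝ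
  | 0 => fun _ => 1
  | 1 => fun x => 1 + h ^ 2 / 2 * deriv g x
  | k + 2 => fun x =>
      2 * UseqDeriv g h (k + 1) x - UseqDeriv g h k x +
        h ^ 2 * (deriv g (Useq g h (k + 1) x) * UseqDeriv g h (k + 1) x)

section Useq

variable {g : ℝ → ℝ} {h x : ℝ}

theorem hasDerivAt_Useq (hg : Differentiable ℝ g) :
    ∀ k, HasDerivAt (Useq g h k) (UseqDeriv g h k x) x
  | 0 => hasDerivAt_id x
  | 1 => (hasDerivAt_id x).add ((hg x).hasDerivAt.const_mul (h ^ 2 / 2))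
  | k + 2 =>
    (((hasDerivAt_Useq hg (k + 1)).const_mul 2).sub (hasDerivAt_Useq hg k)).add
      (((hg _).hasDerivAt.comp x (hasDerivAt_Useq hg (k + 1))).const_mul (h ^ 2))

theorem Useq_add_two_sub (m : ℕ) :
    Useq g h (m + 2) x - Useq g h (m + 1) x =
      Useq g h (m + 1) x - Useq g h m x + h ^ 2 * g (Useq g h (m + 1) x) := by
  simp only [Useq]
  ring

theorem UseqDeriv_add_two_sub (m : ℕ) :
    UseqDeriv g h (m + 2) x - UseqDeriv g h (m + 1) x =
      UseqDeriv g h (m + 1) x - UseqDeriv g h m x +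
        h ^ 2 * (deriv g (Useq g h (m + 1) x) * UseqDeriv g h (m + 1) x) := by
  simp only [UseqDeriv]
  ring

theorem strictMono_Useq (hg_pos : ∀ y > 0, 0 < g y) (hh : h ≠ 0) (hx : 0 < x) :
    StrictMono (fun m => Useq g h m x) := by
  refine strictMono_of_sub_lt_sub ?_ fun m hm => ?_
  · have : 0 < h ^ 2 / 2 * g x := by have := hg_pos x hx; positivity
    simp only [Useq]
    linarith
  · have : 0 < h ^ 2 * g (Useq g h (m + 1) x) := by
      have := hg_pos _ (hx.trans hm); positivity
    linarith [Useq_add_two_sub (g := g) (h := h) (x := x) m]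

theorem strictMono_UseqDeriv (hg_pos : ∀ y > 0, 0 < g y) (hg'_pos : ∀ y > 0, 0 < deriv g y)
    (hh : h ≠ 0) (hx : 0 < x) : StrictMono (fun m => UseqDeriv g h m x) := by
  refine strictMono_of_sub_lt_sub ?_ fun m hm => ?_
  · have : 0 < h ^ 2 / 2 * deriv g x := by have := hg'_pos x hx; positivity
    simp only [UseqDeriv]
    linarith
  · have hU : 0 < Useq g h (m + 1) x :=
      hx.trans_le ((strictMono_Useq hg_pos hh hx).monotone (Nat.zero_le _))
    have : 0 < h ^ 2 * (deriv g (Useq g h (m + 1) x) * UseqDeriv g h (m + 1) x) := by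
      have := hg'_pos _ hU
      have : (0 : ℝ) < UseqDeriv g h (m + 1) x := lt_trans one_pos hm
      positivity
    linarith [UseqDeriv_add_two_sub (g := g) (h := h) (x := x) m]

theorem UseqDeriv_slope_lt (hg : Differentiable ℝ g) (hconv : StrictConvexOn ℝ (Ioi 0) g)
    (hg_pos : ∀ y > 0, 0 < g y) (hg'_pos : ∀ y > 0, 0 < deriv g y) (hh : h ≠ 0) (hx : 0 < x)
    (m : ℕ) :
    (UseqDeriv g h (m + 1) x - UseqDeriv g h m x) / (Useq g h (m + 1) x - Useq g h m x) <
      deriv g (Useq g h (m + 1) x) * UseqDeriv g h (m + 1) x / g (Useq g h (m + 1) x) := by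
  have hU := strictMono_Useq hg_pos hh hx
  have hV := strictMono_UseqDeriv hg_pos hg'_pos hh hx
  induction m with
  | zero =>
    have hc : 0 < h ^ 2 / 2 := by positivity
    have hle : h ^ 2 / 2 * deriv g x / (h ^ 2 / 2 * g x) ≤ deriv g x * 1 / g x := by
      rw [mul_div_mul_left _ _ hc.ne', mul_one]
    have := hconv.div_lt_deriv_mul_div_add_of_le hg hg_pos hg'_pos hx
      (mul_pos hc (hg_pos x hx)) (by have := hg'_pos x hx; positivity) hle
    simpa only [Useq, UseqDeriv, add_sub_cancel_left] using this
  | succ m ih =>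
    have ha : 0 < Useq g h (m + 1) x := hx.trans_le (hU.monotone (Nat.zero_le _))
    have hc : 0 < h ^ 2 := by positivity
    have ih' : (UseqDeriv g h (m + 1) x - UseqDeriv g h m x) /
          (Useq g h (m + 1) x - Useq g h m x) ≤
        h ^ 2 * (deriv g (Useq g h (m + 1) x) * UseqDeriv g h (m + 1) x) /
          (h ^ 2 * g (Useq g h (m + 1) x)) := by
      rw [mul_div_mul_left _ _ hc.ne']
      exact ih.le
    have hle := add_div_add_le_div (sub_pos.2 (hU (Nat.lt_succ_self m)))
      (mul_pos hc (hg_pos _ ha)) ih'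
    rw [← Useq_add_two_sub, ← UseqDeriv_add_two_sub, mul_div_mul_left _ _ hc.ne'] at hle
    have := hconv.div_lt_deriv_mul_div_add_of_le hg hg_pos hg'_pos ha
      (sub_pos.2 (hU (Nat.lt_succ_self (m + 1))))
      (by rw [add_sub_cancel]; exact zero_lt_one.trans_le (hV.monotone (Nat.zero_le _))) hle
    rwa [add_sub_cancel, add_sub_cancel] at this

theorem strictMono_UseqDeriv_slope (hg : Differentiable ℝ g)
    (hconv : StrictConvexOn ℝ (Ioi 0) g) (hg_pos : ∀ y > 0, 0 < g y)
    (hg'_pos : ∀ y > 0, 0 < deriv g y) (hh : h ≠ 0) (hx : 0 < x) :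
    StrictMono fun m =>
      (UseqDeriv g h (m + 1) x - UseqDeriv g h m x) / (Useq g h (m + 1) x - Useq g h m x) := by
  have hU := strictMono_Useq hg_pos hh hx
  refine strictMono_nat_of_lt_succ fun m => ?_
  have ha : 0 < Useq g h (m + 1) x := hx.trans_le (hU.monotone (Nat.zero_le _))
  have hc : 0 < h ^ 2 := by positivity
  have hlt := UseqDeriv_slope_lt hg hconv hg_pos hg'_pos hh hx m
  rw [← mul_div_mul_left _ (g _) hc.ne'] at hlt
  have := div_lt_add_div_add (sub_pos.2 (hU (Nat.lt_succ_self m))) (mul_pos hc (hg_pos _ ha)) hlt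
  rwa [← Useq_add_two_sub, ← UseqDeriv_add_two_sub] at this

theorem div_le_UseqDeriv_slope (hg : Differentiable ℝ g)
    (hconv : StrictConvexOn ℝ (Ioi 0) g) (hg_pos : ∀ y > 0, 0 < g y)
    (hg'_pos : ∀ y > 0, 0 < deriv g y) (hh : h ≠ 0) (hx : 0 < x) (m : ℕ) :
    deriv g x / g x ≤
      (UseqDeriv g h (m + 1) x - UseqDeriv g h m x) / (Useq g h (m + 1) x - Useq g h m x) := by
  have h0 : (UseqDeriv g h 1 x - UseqDeriv g h 0 x) / (Useq g h 1 x - Useq g h 0 x) =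
      deriv g x / g x := by
    simp only [Useq, UseqDeriv, add_sub_cancel_left]
    exact mul_div_mul_left _ _ (by positivity)
  exact h0 ▸ (strictMono_UseqDeriv_slope hg hconv hg_pos hg'_pos hh hx).monotone (Nat.zero_le m)

theorem UseqDeriv_chord_le_slope (hg : Differentiable ℝ g)
    (hconv : StrictConvexOn ℝ (Ioi 0) g) (hg_pos : ∀ y > 0, 0 < g y)
    (hg'_pos : ∀ y > 0, 0 < deriv g y) (hh : h ≠ 0) (hx : 0 < x) (m : ℕ) :
    (UseqDeriv g h (m + 1) x - UseqDeriv g h 0 x) / (Useq g h (m + 1) x - Useq g h 0 x) ≤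
      (UseqDeriv g h (m + 1) x - UseqDeriv g h m x) / (Useq g h (m + 1) x - Useq g h m x) := by
  have hU := strictMono_Useq hg_pos hh hx
  induction m with
  | zero => exact le_rfl
  | succ m ih =>
    have := add_div_add_le_div (sub_pos.2 (hU (Nat.succ_pos m)))
      (sub_pos.2 (hU (Nat.lt_succ_self (m + 1))))
      (ih.trans ((strictMono_UseqDeriv_slope hg hconv hg_pos hg'_pos hh hx).monotone
        (Nat.le_succ m)))
    rwa [sub_add_sub_cancel', sub_add_sub_cancel'] at this

end Useq

theorem stmt_1_general (n : ℕ) (hn : 2 ≤ n) (h : ℝ) (hh : h = 1 / ((n : ℝ) - 1))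
    (g1 : ℝ → ℝ)
    (hg1C : ContDiff ℝ 3 g1)
    (hg10 : g1 0 = 0)
    (hg1d : ∀ x > (0:ℝ), 0 < deriv g1 x)
    (hg1dd : ∀ x > (0:ℝ), 0 < deriv (deriv g1) x) :
    ∀ u1 : ℝ, 0 < u1 → ∀ k, 2 ≤ k → k ≤ n →
      deriv (fun x => (discU g1 h k x - discU g1 h (k - 1) x) / g1 (discU g1 h k x)) u1 < 0 ∧
      deriv (fun x => (discU g1 h k x - discU g1 h 1 x) / g1 (discU g1 h k x)) u1 < 0 ∧
      0 ≤ deriv (fun x =>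
            (discU g1 h k x - discU g1 h (k - 1) x) / (discU g1 h k x - discU g1 h 1 x)) u1 ∧
      0 < deriv (fun x => g1 (discU g1 h k x) / g1 (discU g1 h 1 x)) u1 := by
  have hh0 : h ≠ 0 := by
    have : (1 : ℝ) < n := by exact_mod_cast hn
    rw [hh]
    exact one_div_ne_zero (sub_ne_zero.2 this.ne')
  have hg : Differentiable ℝ g1 := hg1C.differentiable (by norm_num)
  have hconv : StrictConvexOn ℝ (Ioi 0) g1 :=
    strictConvexOn_of_deriv2_pos (convex_Ioi 0) hg.continuous.continuousOn
      (by rw [interior_Ioi]; exact fun x hx => hg1dd x hx)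
  have hg_pos : ∀ y > 0, 0 < g1 y := fun y => pos_of_deriv_pos_s1 hg.continuous hg10 hg1d
  intro u1 hu k hk2 _
  obtain ⟨m, rfl⟩ : ∃ m, k = m + 2 := ⟨k - 2, by omega⟩
  have hU := strictMono_Useq hg_pos hh0 hu
  have hd := hasDerivAt_Useq (h := h) (x := u1) hg
  have hgU : HasDerivAt (fun x => g1 (Useq g1 h (m + 1) x))
      (deriv g1 (Useq g1 h (m + 1) u1) * UseqDeriv g1 h (m + 1) u1) u1 :=
    (hg _).hasDerivAt.comp u1 (hd (m + 1))
  have hdiff : ∀ i j, HasDerivAt (fun x => Useq g1 h i x - Useq g1 h j x)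
      (UseqDeriv g1 h i u1 - UseqDeriv g1 h j u1) u1 := fun i j => (hd i).sub (hd j)
  have ha : 0 < g1 (Useq g1 h (m + 1) u1) := hg_pos _ (hu.trans (hU m.succ_pos))
  have hD : 0 < Useq g1 h (m + 1) u1 - Useq g1 h m u1 := sub_pos.2 (hU m.lt_succ_self)
  have hE : 0 < Useq g1 h (m + 1) u1 - Useq g1 h 0 u1 := sub_pos.2 (hU m.succ_pos)
  have hslope := UseqDeriv_slope_lt hg hconv hg_pos hg1d hh0 hu m
  have hlow := div_le_UseqDeriv_slope hg hconv hg_pos hg1d hh0 hu m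
  have hchord := UseqDeriv_chord_le_slope hg hconv hg_pos hg1d hh0 hu m
  refine ⟨?_, ?_, ?_, ?_⟩
  · exact (deriv_div_eq_div_mul_sub (hdiff _ _) hgU hD.ne' ha.ne').trans_lt
      (mul_neg_of_pos_of_neg (div_pos hD ha) (by linarith))
  · exact (deriv_div_eq_div_mul_sub (hdiff _ _) hgU hE.ne' ha.ne').trans_lt
      (mul_neg_of_pos_of_neg (div_pos hE ha) (by linarith))
  · exact (deriv_div_eq_div_mul_sub (hdiff _ _) (hdiff _ _) hD.ne' hE.ne').ge.trans'
      (mul_nonneg (div_pos hD hE).le (by linarith))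
  · exact (deriv_div_eq_div_mul_sub hgU (hg u1).hasDerivAt ha.ne' (hg_pos u1 hu).ne').ge.trans_lt'
      (mul_pos (div_pos ha (hg_pos u1 hu)) (by linarith))

theorem stmt_1 (n : ℕ) (hn : 2 ≤ n) (h : ℝ) (hh : h = 1 / ((n : ℝ) - 1))
    (g1 g2 : ℝ → ℝ)
    (hg1C : ContDiff ℝ 3 g1) (hg2C : ContDiff ℝ 3 g2)
    (hg10 : g1 0 = 0) (hg20 : g2 0 = 0)
    (hg1d : ∀ x > (0:ℝ), 0 < deriv g1 x) (hg2d : ∀ x > (0:ℝ), 0 < deriv g2 x)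
    (hg1dd : ∀ x > (0:ℝ), 0 < deriv (deriv g1) x)
    (hg2dd : ∀ x > (0:ℝ), 0 < deriv (deriv g2) x)
    (hg1ddd : ∀ x > (0:ℝ), 0 ≤ deriv (deriv (deriv g1)) x)
    (hg2ddd : ∀ x > (0:ℝ), 0 ≤ deriv (deriv (deriv g2)) x) :
    ∀ u1 : ℝ, 0 < u1 → ∀ k, 2 ≤ k → k ≤ n →
      deriv (fun x => (discU g1 h k x - discU g1 h (k - 1) x) / g1 (discU g1 h k x)) u1 < 0 ∧
      deriv (fun x => (discU g1 h k x - discU g1 h 1 x) / g1 (discU g1 h k x)) u1 < 0 ∧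
      0 ≤ deriv (fun x =>
            (discU g1 h k x - discU g1 h (k - 1) x) / (discU g1 h k x - discU g1 h 1 x)) u1 ∧
      0 < deriv (fun x => g1 (discU g1 h k x) / g1 (discU g1 h 1 x)) u1 :=
  stmt_1_general n hn h hh g1 hg1C hg10 hg1d hg1dd
end
end

section
/- For every u₁ > 0 and every m with 2 ≤ m ≤ n, writing u_k := U_k(u₁) for 1 ≤ k ≤ n, the following identity holds: ½((u_m − u_{m−1})/h)² = Σ_{k=1}^{m−1} ((g₁(u_{k+1}) + g₁(u_k))/2)(u_{k+1} − u_k) − (g₁(u₁)/4)(u₂ − u₁) − (g₁(u_m)/2)(u_m − u_{m−1}). -/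
noncomputable section

/-! A discrete energy identity. With slopes `dₖ = (uₖ₊₁ - uₖ)/h`, the recursion says
`dₖ - dₖ₋₁ = h g₁(uₖ)`, so `½dₖ² - ½dₖ₋₁² = g₁(uₖ)(uₖ₊₁ - uₖ₋₁)/2`; summing these increments
rearranges into the trapezoidal sum, corrected at the two ends. -/

open Finset

theorem discrete_energy_identity {f : ℝ → ℝ} {h : ℝ} {u : ℕ → ℝ} (hh : h ≠ 0)
    (hu1 : u 1 - u 0 = h ^ 2 / 2 * f (u 0))
    (hrec : ∀ k, u (k + 2) - 2 * u (k + 1) + u k = h ^ 2 * f (u (k + 1))) (m : ℕ) :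
    1 / 2 * ((u (m + 1) - u m) / h) ^ 2 =
      (∑ k ∈ range (m + 1), (f (u (k + 1)) + f (u k)) / 2 * (u (k + 1) - u k))
        - f (u 0) / 4 * (u 1 - u 0) - f (u (m + 1)) / 2 * (u (m + 1) - u m) := by
  induction m with
  | zero =>
    rw [sum_range_one, hu1]
    field_simp
    ring
  | succ m ih =>
    have hstep : 1 / 2 * ((u (m + 2) - u (m + 1)) / h) ^ 2 - 1 / 2 * ((u (m + 1) - u m) / h) ^ 2
        = f (u (m + 1)) / 2 * ((u (m + 2) - u (m + 1)) + (u (m + 1) - u m)) := by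
      rw [show u (m + 2) = 2 * u (m + 1) - u m + h ^ 2 * f (u (m + 1)) by linarith [hrec m]]
      field_simp
      ring
    rw [sum_range_succ]
    linarith

theorem Useq_energy_identity {g1 : ℝ → ℝ} {h : ℝ} (hh : h ≠ 0) (x : ℝ) (m : ℕ) :
    1 / 2 * ((Useq g1 h (m + 1) x - Useq g1 h m x) / h) ^ 2 =
      (∑ k ∈ range (m + 1), (g1 (Useq g1 h (k + 1) x) + g1 (Useq g1 h k x)) / 2 *
          (Useq g1 h (k + 1) x - Useq g1 h k x))
        - g1 (Useq g1 h 0 x) / 4 * (Useq g1 h 1 x - Useq g1 h 0 x)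
        - g1 (Useq g1 h (m + 1) x) / 2 * (Useq g1 h (m + 1) x - Useq g1 h m x) :=
  discrete_energy_identity (u := fun k => Useq g1 h k x) hh (by simp [Useq])
    (fun k => by simp only [Useq]; ring) m

theorem stmt_3_general (n : ℕ) (hn : 2 ≤ n) (h : ℝ) (hh : h = 1 / ((n : ℝ) - 1))
    (g1 : ℝ → ℝ) :
    ∀ u1 : ℝ, 0 < u1 → ∀ m, 2 ≤ m → m ≤ n →
      1 / 2 * ((discU g1 h m u1 - discU g1 h (m - 1) u1) / h) ^ 2 =
        (∑ k ∈ Finset.Icc 1 (m - 1),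
          (g1 (discU g1 h (k + 1) u1) + g1 (discU g1 h k u1)) / 2 *
            (discU g1 h (k + 1) u1 - discU g1 h k u1))
        - g1 (discU g1 h 1 u1) / 4 * (discU g1 h 2 u1 - discU g1 h 1 u1)
        - g1 (discU g1 h m u1) / 2 * (discU g1 h m u1 - discU g1 h (m - 1) u1) := by
  have h_ne : h ≠ 0 := by
    have : (2 : ℝ) ≤ n := by exact_mod_cast hn
    rw [hh]
    exact one_div_ne_zero (by linarith)
  intro u1 _ m hm _
  obtain ⟨j, rfl⟩ := Nat.exists_eq_add_of_le' hm
  have sum_Icc_one (F : ℕ → ℝ) : ∑ k ∈ Icc 1 (j + 1), F k = ∑ k ∈ range (j + 1), F (k + 1) := by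
    rw [range_eq_Ico, sum_Ico_add', zero_add, Ico_add_one_right_eq_Icc]
  rw [show j + 2 - 1 = j + 1 by omega, sum_Icc_one]
  simpa [discU] using Useq_energy_identity h_ne u1 j

theorem stmt_3 (n : ℕ) (hn : 2 ≤ n) (h : ℝ) (hh : h = 1 / ((n : ℝ) - 1))
    (g1 g2 : ℝ → ℝ)
    (hg1C : ContDiff ℝ 3 g1) (hg2C : ContDiff ℝ 3 g2)
    (hg10 : g1 0 = 0) (hg20 : g2 0 = 0)
    (hg1d : ∀ x > (0:ℝ), 0 < deriv g1 x) (hg2d : ∀ x > (0:ℝ), 0 < deriv g2 x)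
    (hg1dd : ∀ x > (0:ℝ), 0 < deriv (deriv g1) x)
    (hg2dd : ∀ x > (0:ℝ), 0 < deriv (deriv g2) x)
    (hg1ddd : ∀ x > (0:ℝ), 0 ≤ deriv (deriv (deriv g1)) x)
    (hg2ddd : ∀ x > (0:ℝ), 0 ≤ deriv (deriv (deriv g2)) x) :
    ∀ u1 : ℝ, 0 < u1 → ∀ m, 2 ≤ m → m ≤ n →
      1 / 2 * ((discU g1 h m u1 - discU g1 h (m - 1) u1) / h) ^ 2 =
        (∑ k ∈ Finset.Icc 1 (m - 1),
          (g1 (discU g1 h (k + 1) u1) + g1 (discU g1 h k u1)) / 2 *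
            (discU g1 h (k + 1) u1 - discU g1 h k u1))
        - g1 (discU g1 h 1 u1) / 4 * (discU g1 h 2 u1 - discU g1 h 1 u1)
        - g1 (discU g1 h m u1) / 2 * (discU g1 h m u1 - discU g1 h (m - 1) u1) :=
  stmt_3_general n hn h hh g1
end
end

section
/- Let α > 0 and let (u₁,…,u_n) ∈ (0,∞)ⁿ be a positive solution of the discrete system (Sα). Define E := Σ_{k=1}^{n−1} ((g₁(u_k) + g₁(u_{k+1}))/2)(u_{k+1} − u_k) − (G₁(u_n) − G₁(u₁)). Then ½α²g₂²(u_n) − (G₁(u_n) − G₁(u₁)) = E + (h²/8)(g₁²(u_n) − g₁²(u₁)). Moreover, regarding E as a function of u₁ > 0 via u_k = U_k(u₁) for 2 ≤ k ≤ n, E(u₁) is positive and increasing on (0,∞). -/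
noncomputable section

/-!
Multiplying the second-difference equation by `u (k + 1) - u (k - 1)` and summing gives a discrete
energy identity; the two boundary equations turn it into the identity for `α`.

The error `E` is the sum of the trapezoidal-rule errors of `g₁` on the intervals `[U_k, U_{k+1}]`.
The `U_k` are positive and increasing (their increments grow since `g₁ > 0`), so each error is
positive by strict convexity of `g₁`. Likewise the derivatives `U_k'` in `u₁` are positive and
increasing (since `g₁' > 0`), and then the derivative of each error in `u₁` is positive by strict
convexity of `g₁` and convexity of `g₁'`.
-/

open Set intervalIntegral
open MeasureTheory (volume)

section Trapezoid

variable {g : ℝ → ℝ} {a b : ℝ}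

theorem trapezoidal_error_one_eq (g : ℝ → ℝ) (a b : ℝ) :
    trapezoidal_error g 1 a b = (b - a) / 2 * (g a + g b) - ∫ t in a..b, g t := by
  simp [trapezoidal_error]

theorem intervalIntegrable_secant (g : ℝ → ℝ) (a b : ℝ) :
    IntervalIntegrable (fun t => (b - t) * g a + (t - a) * g b) volume a b :=
  (by fun_prop : Continuous fun t => (b - t) * g a + (t - a) * g b).intervalIntegrable a b

theorem integral_secant (g : ℝ → ℝ) (a b : ℝ) :
    ∫ t in a..b, ((b - t) * g a + (t - a) * g b) = (b - a) ^ 2 / 2 * (g a + g b) := by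
  have hsub : ∀ c : ℝ, IntervalIntegrable (fun t => c - t) volume a b :=
    fun c => (continuous_const.sub continuous_id).intervalIntegrable a b
  rw [integral_add ((hsub b).mul_const _) ((intervalIntegrable_id.sub
    intervalIntegrable_const).mul_const _), integral_mul_const, integral_mul_const,
    integral_sub intervalIntegrable_const intervalIntegrable_id,
    integral_sub intervalIntegrable_id intervalIntegrable_const, integral_id,
    integral_const, integral_const, smul_eq_mul, smul_eq_mul]
  ring

theorem mul_trapezoidal_error_one_eq_integral
    (hg : IntervalIntegrable g volume a b) :
    (b - a) * trapezoidal_error g 1 a b =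
      ∫ t in a..b, ((b - t) * g a + (t - a) * g b - (b - a) * g t) := by
  rw [integral_sub (intervalIntegrable_secant g a b) (hg.const_mul _), integral_const_mul,
    integral_secant, trapezoidal_error_one_eq]
  ring

theorem ConvexOn.trapezoidal_error_one_nonneg (hab : a ≤ b) (hgc : ContinuousOn g (Icc a b))
    (hg : ConvexOn ℝ (Icc a b) g) : 0 ≤ trapezoidal_error g 1 a b := by
  rcases hab.eq_or_lt with rfl | hab
  · simp
  have hgi : IntervalIntegrable g volume a b := hgc.intervalIntegrable_of_Icc hab.le
  have hgap : 0 ≤ ∫ t in a..b, ((b - t) * g a + (t - a) * g b - (b - a) * g t) := by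
    simpa using integral_mono_on_of_le_Ioo hab.le intervalIntegrable_const
      ((intervalIntegrable_secant g a b).sub (hgi.const_mul _)) fun t ht => sub_nonneg.2 <| by
        linarith [hg.secant_mono_aux1 (left_mem_Icc.2 hab.le) (right_mem_Icc.2 hab.le) ht.1 ht.2]
  rw [← mul_trapezoidal_error_one_eq_integral hgi] at hgap
  exact nonneg_of_mul_nonneg_right hgap (sub_pos.2 hab)

theorem StrictConvexOn.trapezoidal_error_one_pos (hab : a < b) (hgc : ContinuousOn g (Icc a b))
    (hg : StrictConvexOn ℝ (Icc a b) g) : 0 < trapezoidal_error g 1 a b := by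
  have hgi : IntervalIntegrable g volume a b := hgc.intervalIntegrable_of_Icc hab.le
  have hgap : 0 < ∫ t in a..b, ((b - t) * g a + (t - a) * g b - (b - a) * g t) :=
    intervalIntegral_pos_of_pos_on ((intervalIntegrable_secant g a b).sub (hgi.const_mul _))
      (fun t ht => sub_pos.2 <| by
        linarith [hg.secant_strict_mono_aux1 (left_mem_Icc.2 hab.le) (right_mem_Icc.2 hab.le)
          ht.1 ht.2]) hab
  rw [← mul_trapezoidal_error_one_eq_integral hgi] at hgap
  exact pos_of_mul_pos_right hgap (sub_pos.2 hab).le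

/-- The two brackets are the partial derivatives of `2 * trapezoidal_error g 1 a b` in `a` and
`b`. The sum is `(b' - a')` times the second bracket, positive by strict convexity, plus `a'` times
their sum, which is `2 * trapezoidal_error (deriv g) 1 a b ≥ 0`. -/
theorem tangent_gaps_weighted_sum_pos (hg : ContDiff ℝ 1 g) (hab : a < b)
    (hconv : StrictConvexOn ℝ (Icc a b) g) (hconv' : ConvexOn ℝ (Icc a b) (deriv g))
    {a' b' : ℝ} (ha' : 0 ≤ a') (hab' : a' < b') :
    0 < a' * (deriv g a * (b - a) - (g b - g a)) + b' * (deriv g b * (b - a) - (g b - g a)) := by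
  have hdiff : Differentiable ℝ g := hg.differentiable one_ne_zero
  have hsecant : g b - g a < deriv g b * (b - a) := by
    have := hconv.slope_lt_deriv (left_mem_Icc.2 hab.le) (right_mem_Icc.2 hab.le) hab (hdiff b)
    rwa [slope_def_field, div_lt_iff₀ (sub_pos.2 hab)] at this
  have htrap := hconv'.trapezoidal_error_one_nonneg hab.le
    (hg.continuous_deriv le_rfl).continuousOn
  rw [trapezoidal_error_one_eq, integral_deriv_eq_sub (fun x _ => hdiff x)
    ((hg.continuous_deriv le_rfl).intervalIntegrable a b)] at htrap
  nlinarith [mul_nonneg ha' htrap, mul_pos (sub_pos.2 hab') (sub_pos.2 hsecant)]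

theorem integral_eq_primG1_sub (hg : Continuous g) (a b : ℝ) :
    ∫ t in a..b, g t = primG1 g b - primG1 g a :=
  (integral_interval_sub_left (hg.intervalIntegrable 0 b) (hg.intervalIntegrable 0 a)).symm

theorem hasDerivAt_primG1 (hg : Continuous g) (x : ℝ) : HasDerivAt (primG1 g) (g x) x :=
  (hg.integral_hasStrictDerivAt 0 x).hasDerivAt

theorem hasDerivAt_trapezoidal_error_one (hg : Differentiable ℝ g) {a b : ℝ → ℝ} {a' b' x : ℝ}
    (ha : HasDerivAt a a' x) (hb : HasDerivAt b b' x) :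
    HasDerivAt (fun y => trapezoidal_error g 1 (a y) (b y))
      ((a' * (deriv g (a x) * (b x - a x) - (g (b x) - g (a x))) +
        b' * (deriv g (b x) * (b x - a x) - (g (b x) - g (a x)))) / 2) x := by
  simp only [trapezoidal_error_one_eq, integral_eq_primG1_sub hg.continuous]
  have hga : HasDerivAt (fun y => g (a y)) (deriv g (a x) * a') x :=
    (hg (a x)).hasDerivAt.comp x ha
  have hgb : HasDerivAt (fun y => g (b y)) (deriv g (b x) * b') x :=
    (hg (b x)).hasDerivAt.comp x hb
  have hPa : HasDerivAt (fun y => primG1 g (a y)) (g (a x) * a') x :=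
    (hasDerivAt_primG1 hg.continuous (a x)).comp x ha
  have hPb : HasDerivAt (fun y => primG1 g (b y)) (g (b x) * b') x :=
    (hasDerivAt_primG1 hg.continuous (b x)).comp x hb
  refine ((((hb.fun_sub ha).div_const 2).fun_mul (hga.fun_add hgb)).fun_sub
    (hPb.fun_sub hPa)).congr_deriv ?_
  ring

end Trapezoid

theorem pos_and_lt_succ_of_sub_le_sub {s : ℕ → ℝ} (h0 : 0 < s 0) (h01 : s 0 < s 1)
    (hs : ∀ k, 0 < s (k + 1) → s (k + 1) - s k ≤ s (k + 2) - s (k + 1)) :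
    ∀ k, 0 < s k ∧ s k < s (k + 1)
  | 0 => ⟨h0, h01⟩
  | k + 1 => by
    obtain ⟨hk, hlt⟩ := pos_and_lt_succ_of_sub_le_sub h0 h01 hs k
    have hpos : 0 < s (k + 1) := hk.trans hlt
    exact ⟨hpos, by linarith [hs k hpos]⟩

/-- Discrete energy identity: multiply the `k`-th equation by `u (k + 1) - u (k - 1)` and
telescope. -/
theorem sq_sub_add_mul_eq_of_second_diff {u f : ℕ → ℝ} {c : ℝ} {m : ℕ} (hm : 1 ≤ m)
    (hrec : ∀ k, 2 ≤ k → k ≤ m → u (k + 1) - 2 * u k + u (k - 1) = c * f k) :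
    (u (m + 1) - u m) ^ 2 + c * f (m + 1) * (u (m + 1) - u m) =
      (u 2 - u 1) ^ 2 - c * f 1 * (u 2 - u 1) +
        2 * c * ∑ k ∈ Finset.Icc 1 m, (f k + f (k + 1)) / 2 * (u (k + 1) - u k) := by
  induction m, hm using Nat.le_induction with
  | base => simp only [Finset.Icc_self, Finset.sum_singleton]; ring
  | succ m hm ih =>
    have hstep := hrec (m + 1) (by omega) le_rfl
    rw [Nat.add_sub_cancel] at hstep
    rw [Finset.sum_Icc_succ_top (by omega)]
    linear_combination ih (fun k hk hkm => hrec k hk (by omega)) + (u (m + 2) - u m) * hstep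

section ConvexityFromDerivatives

variable {g : ℝ → ℝ}

theorem pos_of_deriv_pos_of_map_zero (hg : Continuous g) (hg0 : g 0 = 0)
    (hg' : ∀ x > 0, 0 < deriv g x) {x : ℝ} (hx : 0 < x) : 0 < g x :=
  hg0 ▸ strictMonoOn_of_deriv_pos (convex_Ici 0) hg.continuousOn (by simpa using hg')
    self_mem_Ici hx.le hx

theorem strictConvexOn_Ici_of_deriv2_pos (hg : Continuous g)
    (hg'' : ∀ x > 0, 0 < deriv (deriv g) x) : StrictConvexOn ℝ (Ici 0) g :=
  strictConvexOn_of_deriv2_pos (convex_Ici 0) hg.continuousOn (by simpa using hg'')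

theorem convexOn_Ici_deriv_of_deriv3_nonneg (hg : ContDiff ℝ 3 g)
    (hg''' : ∀ x > 0, 0 ≤ deriv (deriv (deriv g)) x) : ConvexOn ℝ (Ici 0) (deriv g) := by
  have h2 : ContDiff ℝ 2 (deriv g) := (contDiff_succ_iff_deriv (n := 2).1 hg).2.2
  have h1 : ContDiff ℝ 1 (deriv (deriv g)) := (contDiff_succ_iff_deriv (n := 1).1 h2).2.2
  exact convexOn_of_deriv2_nonneg (convex_Ici 0) h2.continuous.continuousOn
    (h2.differentiable two_ne_zero).differentiableOn
    (h1.differentiable one_ne_zero).differentiableOn (by simpa using hg''')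

end ConvexityFromDerivatives

section Useq

variable {g : ℝ → ℝ} {h x : ℝ}

theorem Useq_pos_and_lt_succ (hh : h ≠ 0) (hg : ∀ y > 0, 0 < g y) (hx : 0 < x) :
    ∀ k, 0 < Useq g h k x ∧ Useq g h k x < Useq g h (k + 1) x := by
  have hh2 : 0 < h ^ 2 := by positivity
  refine pos_and_lt_succ_of_sub_le_sub hx ?_ fun k hk => ?_
  · simp only [Useq]
    nlinarith [hg x hx]
  · simp only [Useq]
    nlinarith [hg _ hk]

theorem differentiable_Useq (hg : Differentiable ℝ g) : ∀ k, Differentiable ℝ (Useq g h k)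
  | 0 => differentiable_id
  | 1 => differentiable_id.add (hg.const_mul _)
  | k + 2 => by
    have := differentiable_Useq hg (k + 1)
    exact ((this.const_mul 2).sub (differentiable_Useq hg k)).add ((hg.comp this).const_mul _)

theorem deriv_Useq_pos_and_lt_succ (hh : h ≠ 0) (hg : Differentiable ℝ g)
    (hgpos : ∀ y > 0, 0 < g y) (hg' : ∀ y > 0, 0 < deriv g y) (hx : 0 < x) :
    ∀ k, 0 < deriv (Useq g h k) x ∧ deriv (Useq g h k) x < deriv (Useq g h (k + 1)) x := by
  have hh2 : 0 < h ^ 2 := by positivity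
  have hd k : HasDerivAt (Useq g h k) (deriv (Useq g h k) x) x :=
    (differentiable_Useq hg k x).hasDerivAt
  have h0 : deriv (Useq g h 0) x = 1 := deriv_id x
  have h1 : deriv (Useq g h 1) x = 1 + h ^ 2 / 2 * deriv g x :=
    ((hasDerivAt_id x).add ((hg x).hasDerivAt.const_mul _)).deriv
  have h2 k : deriv (Useq g h (k + 2)) x = 2 * deriv (Useq g h (k + 1)) x - deriv (Useq g h k) x +
      h ^ 2 * (deriv g (Useq g h (k + 1) x) * deriv (Useq g h (k + 1)) x) :=
    ((((hd (k + 1)).const_mul 2).sub (hd k)).add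
      (((hg _).hasDerivAt.comp x (hd (k + 1))).const_mul _)).deriv
  refine pos_and_lt_succ_of_sub_le_sub (by rw [h0]; exact one_pos) ?_ fun k hk => ?_
  · rw [h0, h1]
    nlinarith [hg' x hx]
  · rw [h2]
    nlinarith [mul_pos hh2 (mul_pos (hg' _ (Useq_pos_and_lt_succ hh hgpos hx (k + 1)).1) hk)]

end Useq

section trapError

variable {g : ℝ → ℝ} {h x : ℝ} {n : ℕ}

theorem trapError_eq_sum (hg : Continuous g) :
    trapError g h n x =
      ∑ j ∈ Finset.range (n - 1), trapezoidal_error g 1 (Useq g h j x) (Useq g h (j + 1) x) := by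
  simp only [trapezoidal_error_one_eq, integral_eq_primG1_sub hg, Finset.sum_sub_distrib,
    Finset.sum_range_sub (fun j => primG1 g (Useq g h j x))]
  unfold trapError discU
  rw [Nat.sub_self]
  congr 1
  refine Finset.sum_nbij' (· - 1) (· + 1) ?_ ?_ ?_ ?_ fun k hk => ?_
  all_goals simp only [Finset.mem_Icc, Finset.mem_range] at *
  all_goals try omega
  rw [Nat.add_sub_cancel, Nat.sub_add_cancel hk.1]
  ring

theorem trapError_pos (hn : 2 ≤ n) (hh : h ≠ 0) (hgc : Continuous g) (hgpos : ∀ y > 0, 0 < g y)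
    (hconv : StrictConvexOn ℝ (Ici 0) g) (hx : 0 < x) : 0 < trapError g h n x := by
  rw [trapError_eq_sum hgc]
  refine Finset.sum_pos (fun j _ => ?_) (Finset.nonempty_range_iff.2 (by omega))
  obtain ⟨hpos, hlt⟩ := Useq_pos_and_lt_succ hh hgpos hx j
  exact (hconv.subset (Icc_subset_Ici_self.trans (Ici_subset_Ici.2 hpos.le))
    (convex_Icc _ _)).trapezoidal_error_one_pos hlt hgc.continuousOn

theorem strictMonoOn_trapezoidal_error_Useq (hh : h ≠ 0) (hg : ContDiff ℝ 1 g)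
    (hgpos : ∀ y > 0, 0 < g y) (hg' : ∀ y > 0, 0 < deriv g y)
    (hconv : StrictConvexOn ℝ (Ici 0) g) (hconv' : ConvexOn ℝ (Ici 0) (deriv g)) (j : ℕ) :
    StrictMonoOn (fun x => trapezoidal_error g 1 (Useq g h j x) (Useq g h (j + 1) x)) (Ioi 0) := by
  have hdiff : Differentiable ℝ g := hg.differentiable one_ne_zero
  have hU (k : ℕ) (x : ℝ) : HasDerivAt (Useq g h k) (deriv (Useq g h k) x) x :=
    (differentiable_Useq hdiff k x).hasDerivAt
  have hD x := hasDerivAt_trapezoidal_error_one hdiff (hU j x) (hU (j + 1) x)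
  refine strictMonoOn_of_deriv_pos (convex_Ioi 0)
    (fun x _ => (hD x).continuousAt.continuousWithinAt) fun x hx => ?_
  rw [interior_Ioi] at hx
  obtain ⟨hpos, hlt⟩ := Useq_pos_and_lt_succ hh hgpos hx j
  obtain ⟨hpos', hlt'⟩ := deriv_Useq_pos_and_lt_succ hh hdiff hgpos hg' hx j
  have hsub : Icc _ (Useq g h (j + 1) x) ⊆ Ici 0 :=
    Icc_subset_Ici_self.trans (Ici_subset_Ici.2 hpos.le)
  rw [(hD x).deriv]
  exact div_pos (tangent_gaps_weighted_sum_pos hg hlt (hconv.subset hsub (convex_Icc _ _))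
    (hconv'.subset hsub (convex_Icc _ _)) hpos'.le hlt') two_pos

theorem trapError_strictMonoOn (hn : 2 ≤ n) (hh : h ≠ 0) (hg : ContDiff ℝ 1 g)
    (hgpos : ∀ y > 0, 0 < g y) (hg' : ∀ y > 0, 0 < deriv g y)
    (hconv : StrictConvexOn ℝ (Ici 0) g) (hconv' : ConvexOn ℝ (Ici 0) (deriv g)) :
    StrictMonoOn (trapError g h n) (Ioi 0) := by
  intro x hx y hy hxy
  simp only [trapError_eq_sum hg.continuous]
  exact Finset.sum_lt_sum_of_nonempty (Finset.nonempty_range_iff.2 (by omega)) fun j _ =>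
    strictMonoOn_trapezoidal_error_Useq hh hg hgpos hg' hconv hconv' j hx hy hxy

end trapError

theorem IsSolution.half_sq_mul_sq_eq {g1 g2 : ℝ → ℝ} {n : ℕ} {h α : ℝ} {u : ℕ → ℝ}
    (hn : 2 ≤ n) (hh : h ≠ 0) (hu : IsSolution g1 g2 n h α u) :
    1 / 2 * α ^ 2 * g2 (u n) ^ 2 =
      ∑ k ∈ Finset.Icc 1 (n - 1), (g1 (u k) + g1 (u (k + 1))) / 2 * (u (k + 1) - u k) +
        h ^ 2 / 8 * (g1 (u n) ^ 2 - g1 (u 1) ^ 2) := by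
  obtain ⟨-, hfirst, hrec, hlast⟩ := hu
  have henergy := sq_sub_add_mul_eq_of_second_diff (f := fun k => g1 (u k)) (m := n - 1)
    (by omega) hrec
  rw [Nat.sub_add_cancel (by omega : 1 ≤ n), hfirst, hlast] at henergy
  refine mul_left_cancel₀ (pow_ne_zero 2 hh) ?_
  linear_combination henergy / 2

theorem stmt_4_general (n : ℕ) (hn : 2 ≤ n) (h : ℝ) (hh : h = 1 / ((n : ℝ) - 1))
    (g1 g2 : ℝ → ℝ)
    (hg1C : ContDiff ℝ 3 g1)
    (hg10 : g1 0 = 0)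
    (hg1d : ∀ x > (0:ℝ), 0 < deriv g1 x)
    (hg1dd : ∀ x > (0:ℝ), 0 < deriv (deriv g1) x)
    (hg1ddd : ∀ x > (0:ℝ), 0 ≤ deriv (deriv (deriv g1)) x)
    (α : ℝ) (u : ℕ → ℝ) (hu : IsSolution g1 g2 n h α u) :
    1 / 2 * α ^ 2 * (g2 (u n)) ^ 2 - (primG1 g1 (u n) - primG1 g1 (u 1)) =
      ((∑ k ∈ Finset.Icc 1 (n - 1),
          (g1 (u k) + g1 (u (k + 1))) / 2 * (u (k + 1) - u k)) -
        (primG1 g1 (u n) - primG1 g1 (u 1)))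
      + h ^ 2 / 8 * ((g1 (u n)) ^ 2 - (g1 (u 1)) ^ 2) ∧
    (∀ x > (0:ℝ), 0 < trapError g1 h n x) ∧
    StrictMonoOn (trapError g1 h n) (Set.Ioi 0) := by
  have hh0 : h ≠ 0 := by
    have : (2 : ℝ) ≤ n := by exact_mod_cast hn
    rw [hh]
    exact one_div_ne_zero (by linarith)
  have hg1pos : ∀ y > 0, 0 < g1 y := fun _ hy =>
    pos_of_deriv_pos_of_map_zero hg1C.continuous hg10 hg1d hy
  have hconv := strictConvexOn_Ici_of_deriv2_pos hg1C.continuous hg1dd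
  have hconv' := convexOn_Ici_deriv_of_deriv3_nonneg hg1C hg1ddd
  refine ⟨?_, fun x hx => trapError_pos hn hh0 hg1C.continuous hg1pos hconv hx,
    trapError_strictMonoOn hn hh0 (hg1C.of_le (by norm_num)) hg1pos hg1d hconv hconv'⟩
  linarith [hu.half_sq_mul_sq_eq hn hh0]

theorem stmt_4 (n : ℕ) (hn : 2 ≤ n) (h : ℝ) (hh : h = 1 / ((n : ℝ) - 1))
    (g1 g2 : ℝ → ℝ)
    (hg1C : ContDiff ℝ 3 g1) (hg2C : ContDiff ℝ 3 g2)
    (hg10 : g1 0 = 0) (hg20 : g2 0 = 0)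
    (hg1d : ∀ x > (0:ℝ), 0 < deriv g1 x) (hg2d : ∀ x > (0:ℝ), 0 < deriv g2 x)
    (hg1dd : ∀ x > (0:ℝ), 0 < deriv (deriv g1) x)
    (hg2dd : ∀ x > (0:ℝ), 0 < deriv (deriv g2) x)
    (hg1ddd : ∀ x > (0:ℝ), 0 ≤ deriv (deriv (deriv g1)) x)
    (hg2ddd : ∀ x > (0:ℝ), 0 ≤ deriv (deriv (deriv g2)) x)
    (α : ℝ) (hα : 0 < α) (u : ℕ → ℝ) (hu : IsSolution g1 g2 n h α u) :
    1 / 2 * α ^ 2 * (g2 (u n)) ^ 2 - (primG1 g1 (u n) - primG1 g1 (u 1)) =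
      ((∑ k ∈ Finset.Icc 1 (n - 1),
          (g1 (u k) + g1 (u (k + 1))) / 2 * (u (k + 1) - u k)) -
        (primG1 g1 (u n) - primG1 g1 (u 1)))
      + h ^ 2 / 8 * ((g1 (u n)) ^ 2 - (g1 (u 1)) ^ 2) ∧
    (∀ x > (0:ℝ), 0 < trapError g1 h n x) ∧
    StrictMonoOn (trapError g1 h n) (Set.Ioi 0) :=
  stmt_4_general n hn h hh g1 g2 hg1C hg10 hg1d hg1dd hg1ddd α u hu
end
end

section
/- Let α > 0 and let (u₁,…,u_n) ∈ (0,∞)ⁿ be a positive solution of the discrete system (Sα). Then α·g₂(u_n) < g₁(u_n). -/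
noncomputable section

/-! Summing the equations of `(Sα)` telescopes to `α g₂(uₙ) = h T`, where
`T = g₁(u₁)/2 + g₁(u₂) + ⋯ + g₁(uₙ₋₁) + g₁(uₙ)/2` is the trapezoidal sum of `g₁ ∘ u`.
The same partial sums show that the first differences of `u` are positive, so `u` and hence
`g₁ ∘ u` increase strictly; thus `T < (n - 1) g₁(uₙ) = g₁(uₙ) / h`. -/

open Finset

lemma strictMonoOn_Ici_zero_of_deriv_pos {g : ℝ → ℝ} (hg : Continuous g)
    (hd : ∀ x > 0, 0 < deriv g x) : StrictMonoOn g (Set.Ici 0) :=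
  strictMonoOn_of_deriv_pos (convex_Ici 0) hg.continuousOn fun x hx ↦
    hd x (by rwa [interior_Ici] at hx)

lemma sub_eq_sub_add_sum_of_second_diff {u f : ℕ → ℝ} {m : ℕ}
    (hu : ∀ k, 2 ≤ k → k ≤ m → u (k + 1) - 2 * u k + u (k - 1) = f k) :
    ∀ k, 1 ≤ k → k ≤ m → u (k + 1) - u k = u 2 - u 1 + ∑ j ∈ Icc 2 k, f j := by
  intro k hk
  induction k, hk using Nat.le_induction with
  | base => simp
  | succ k hk ih =>
    intro hkm
    have hrec := hu (k + 1) (by omega) hkm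
    rw [Nat.add_sub_cancel] at hrec
    rw [sum_Icc_succ_top (by omega : 2 ≤ k + 1)]
    linarith [ih (by omega)]

lemma trapezoid_lt_of_strictMonoOn {a : ℕ → ℝ} {n : ℕ} (hn : 2 ≤ n)
    (ha : StrictMonoOn a (Set.Icc 1 n)) :
    a 1 / 2 + ∑ j ∈ Icc 2 (n - 1), a j + a n / 2 < ((n : ℝ) - 1) * a n := by
  have hn_mem : n ∈ Set.Icc 1 n := ⟨by omega, le_rfl⟩
  have h1 : a 1 < a n := ha ⟨le_rfl, by omega⟩ hn_mem (by omega)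
  have hle : ∀ j ∈ Icc 2 (n - 1), a j ≤ a n := fun j hj ↦ by
    rw [mem_Icc] at hj
    exact ha.monotoneOn ⟨by omega, by omega⟩ hn_mem (by omega)
  have hsum : ∑ j ∈ Icc 2 (n - 1), a j ≤ ((n : ℝ) - 2) * a n := by
    calc ∑ j ∈ Icc 2 (n - 1), a j ≤ #(Icc 2 (n - 1)) • a n := sum_le_card_nsmul _ _ _ hle
      _ = ((n : ℝ) - 2) * a n := by
        rw [Nat.card_Icc, nsmul_eq_mul, show n - 1 + 1 - 2 = n - 2 by omega, Nat.cast_sub hn]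
        push_cast
        ring
  linarith

namespace IsSolution

variable {g1 g2 : ℝ → ℝ} {n : ℕ} {h α : ℝ} {u : ℕ → ℝ}

lemma sub_eq_sum (hu : IsSolution g1 g2 n h α u) {k : ℕ} (hk1 : 1 ≤ k) (hkn : k ≤ n - 1) :
    u (k + 1) - u k = h ^ 2 * (g1 (u 1) / 2 + ∑ j ∈ Icc 2 k, g1 (u j)) := by
  rw [sub_eq_sub_add_sum_of_second_diff hu.2.2.1 k hk1 hkn, hu.2.1, mul_add, mul_sum]
  ring

lemma strictMonoOn (hu : IsSolution g1 g2 n h α u) (hh : h ≠ 0)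
    (hg1 : ∀ x > 0, 0 < g1 x) : StrictMonoOn u (Set.Icc 1 n) := by
  refine strictMonoOn_of_lt_succ Set.ordConnected_Icc fun k _ hk hk1 ↦ ?_
  simp only [Order.succ_eq_add_one, Set.mem_Icc] at hk hk1 ⊢
  have hsum : 0 ≤ ∑ j ∈ Icc 2 k, g1 (u j) := sum_nonneg fun j hj ↦ by
    rw [mem_Icc] at hj
    exact (hg1 _ (hu.1 j (by omega) (by omega))).le
  have h1 := hg1 _ (hu.1 1 le_rfl (by omega))
  have hstep : 0 < h ^ 2 * (g1 (u 1) / 2 + ∑ j ∈ Icc 2 k, g1 (u j)) := by positivity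
  linarith [hu.sub_eq_sum hk.1 (by omega)]

lemma mul_g2_eq_trapezoid (hu : IsSolution g1 g2 n h α u) (hn : 2 ≤ n) (hh : h ≠ 0) :
    α * g2 (u n) = h * (g1 (u 1) / 2 + ∑ j ∈ Icc 2 (n - 1), g1 (u j) + g1 (u n) / 2) := by
  have hdiff := hu.sub_eq_sum (k := n - 1) (by omega) le_rfl
  rw [Nat.sub_add_cancel (by omega)] at hdiff
  apply mul_left_cancel₀ hh
  linear_combination hdiff - hu.2.2.2

end IsSolution

theorem stmt_5_general (n : ℕ) (hn : 2 ≤ n) (h : ℝ) (hh : h = 1 / ((n : ℝ) - 1))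
    (g1 g2 : ℝ → ℝ)
    (hg1C : ContDiff ℝ 3 g1)
    (hg10 : g1 0 = 0)
    (hg1d : ∀ x > (0:ℝ), 0 < deriv g1 x)
    (α : ℝ) (u : ℕ → ℝ) (hu : IsSolution g1 g2 n h α u) :
    α * g2 (u n) < g1 (u n) := by
  have hn1 : (1 : ℝ) < n := by exact_mod_cast hn
  have hh0 : 0 < h := by rw [hh]; exact one_div_pos.2 (by linarith)
  have hhn : h * ((n : ℝ) - 1) = 1 := by rw [hh]; field_simp [sub_ne_zero.2 hn1.ne']
  have hg1mono := strictMonoOn_Ici_zero_of_deriv_pos hg1C.continuous hg1d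
  have hg1pos : ∀ x > 0, 0 < g1 x := fun x hx ↦
    hg10 ▸ hg1mono Set.self_mem_Ici (Set.mem_Ici.2 hx.le) hx
  have hg1u : StrictMonoOn (g1 ∘ u) (Set.Icc 1 n) :=
    hg1mono.comp (hu.strictMonoOn hh0.ne' hg1pos) fun k hk ↦ (hu.1 k hk.1 hk.2).le
  calc α * g2 (u n) = h * (g1 (u 1) / 2 + ∑ j ∈ Icc 2 (n - 1), g1 (u j) + g1 (u n) / 2) :=
        hu.mul_g2_eq_trapezoid hn hh0.ne'
    _ < h * (((n : ℝ) - 1) * g1 (u n)) :=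
        mul_lt_mul_of_pos_left (trapezoid_lt_of_strictMonoOn hn hg1u) hh0
    _ = g1 (u n) := by rw [← mul_assoc, hhn, one_mul]

theorem stmt_5 (n : ℕ) (hn : 2 ≤ n) (h : ℝ) (hh : h = 1 / ((n : ℝ) - 1))
    (g1 g2 : ℝ → ℝ)
    (hg1C : ContDiff ℝ 3 g1) (hg2C : ContDiff ℝ 3 g2)
    (hg10 : g1 0 = 0) (hg20 : g2 0 = 0)
    (hg1d : ∀ x > (0:ℝ), 0 < deriv g1 x) (hg2d : ∀ x > (0:ℝ), 0 < deriv g2 x)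
    (hg1dd : ∀ x > (0:ℝ), 0 < deriv (deriv g1) x)
    (hg2dd : ∀ x > (0:ℝ), 0 < deriv (deriv g2) x)
    (hg1ddd : ∀ x > (0:ℝ), 0 ≤ deriv (deriv (deriv g1)) x)
    (hg2ddd : ∀ x > (0:ℝ), 0 ≤ deriv (deriv (deriv g2)) x)
    (α : ℝ) (hα : 0 < α) (u : ℕ → ℝ) (hu : IsSolution g1 g2 n h α u) :
    α * g2 (u n) < g1 (u n) :=
  stmt_5_general n hn h hh g1 g2 hg1C hg10 hg1d α u hu
end
end

section
/- Let α > 0 and let (u₁,…,u_n) ∈ (0,∞)ⁿ be a positive solution of the discrete system (Sα). If the function g := g₁/g₂ is a strictly increasing bijection of (0,∞) onto (0,∞), then u_n > g⁻¹(α). -/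
noncomputable section

/-!
By induction along the scheme, `u` is increasing with increments
`u (k+1) - u k ≤ h² (k - 1/2) g₁(u k)`. Inserting the bound for the last increment into the
boundary condition gives `h α g₂(u n) < h² (n - 1) g₁(u n) = h g₁(u n)`, i.e. `α < g(u n)`,
and the strict monotonicity of `g` turns this into `g⁻¹(α) < u n`.
-/

open Set

lemma strictMonoOn_Ici_zero_of_deriv_pos_s6 {f : ℝ → ℝ} (hf : Continuous f)
    (hd : ∀ x > (0:ℝ), 0 < deriv f x) : StrictMonoOn f (Ici 0) :=
  strictMonoOn_of_deriv_pos (convex_Ici 0) hf.continuousOn (by simpa [interior_Ici] using hd)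

namespace IsSolution

variable {g1 g2 : ℝ → ℝ} {n : ℕ} {h α : ℝ} {u : ℕ → ℝ}

lemma lt_succ_and_sub_le (hu : IsSolution g1 g2 n h α u) (hh : h ≠ 0)
    (hg1 : StrictMonoOn g1 (Ici 0)) (hg10 : g1 0 = 0) {k : ℕ} (hk : 1 ≤ k) (hkn : k ≤ n - 1) :
    u k < u (k + 1) ∧ u (k + 1) - u k ≤ h ^ 2 * ((k : ℝ) - 1 / 2) * g1 (u k) := by
  obtain ⟨hupos, hfirst, hmid, -⟩ := hu
  have hg1pos : ∀ x > (0:ℝ), 0 < g1 x := fun x hx => hg10 ▸ hg1 self_mem_Ici hx.le hx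
  induction k, hk using Nat.le_induction with
  | base =>
    have : 0 < h ^ 2 / 2 * g1 (u 1) := by
      have := hg1pos _ (hupos 1 le_rfl (by omega))
      positivity
    constructor <;> norm_num <;> linarith
  | succ k hk ih =>
    obtain ⟨hlt, hle⟩ := ih (by omega)
    have hrec := hmid (k + 1) (by omega) hkn
    rw [Nat.add_sub_cancel] at hrec
    have huk : 0 < u k := hupos k hk (by omega)
    have hg1mono : g1 (u k) ≤ g1 (u (k + 1)) :=
      hg1.monotoneOn huk.le (huk.trans hlt).le hlt.le
    have hcoef : 0 ≤ h ^ 2 * ((k : ℝ) - 1 / 2) := by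
      have : (1:ℝ) ≤ k := by exact_mod_cast hk
      nlinarith [sq_nonneg h]
    have : 0 < h ^ 2 * g1 (u (k + 1)) := by
      have := hg1pos _ (huk.trans hlt)
      positivity
    refine ⟨by linarith, ?_⟩
    push_cast
    nlinarith [mul_le_mul_of_nonneg_left hg1mono hcoef]

lemma lt_gg (hu : IsSolution g1 g2 n h α u) (hn : 2 ≤ n) (hh : h = 1 / ((n : ℝ) - 1))
    (hg1 : StrictMonoOn g1 (Ici 0)) (hg10 : g1 0 = 0) (hg2 : 0 < g2 (u n)) :
    α < gg g1 g2 (u n) := by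
  have hn' : (2:ℝ) ≤ n := by exact_mod_cast hn
  have hhpos : 0 < h := by rw [hh]; apply div_pos one_pos; linarith
  obtain ⟨hlt, hle⟩ := hu.lt_succ_and_sub_le hhpos.ne' hg1 hg10 (k := n - 1) (by omega) le_rfl
  rw [Nat.sub_add_cancel (by omega)] at hlt hle
  rw [Nat.cast_sub (by omega), Nat.cast_one] at hle
  have hun1 : 0 < u (n - 1) := hu.1 (n - 1) (by omega) (by omega)
  have hg1lt : g1 (u (n - 1)) < g1 (u n) := hg1 hun1.le (hun1.trans hlt).le hlt
  have hstep : h ^ 2 * ((n : ℝ) - 1 - 1 / 2) * g1 (u (n - 1)) <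
      h ^ 2 * ((n : ℝ) - 1 - 1 / 2) * g1 (u n) :=
    mul_lt_mul_of_pos_left hg1lt (by nlinarith)
  have hsq : h ^ 2 * ((n : ℝ) - 1) = h := by
    rw [hh]; field_simp [show (n : ℝ) - 1 ≠ 0 by linarith]
  have hmain : h * (α * g2 (u n)) < h * g1 (u n) := by
    linear_combination -hu.2.2.2 + hle + hstep + g1 (u n) * hsq
  rw [gg, lt_div_iff₀ hg2]
  exact lt_of_mul_lt_mul_left hmain hhpos.le

end IsSolution

theorem stmt_6_general (n : ℕ) (hn : 2 ≤ n) (h : ℝ) (hh : h = 1 / ((n : ℝ) - 1))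
    (g1 g2 : ℝ → ℝ)
    (hg1C : ContDiff ℝ 3 g1) (hg2C : ContDiff ℝ 3 g2)
    (hg10 : g1 0 = 0) (hg20 : g2 0 = 0)
    (hg1d : ∀ x > (0:ℝ), 0 < deriv g1 x) (hg2d : ∀ x > (0:ℝ), 0 < deriv g2 x)
    (α : ℝ) (hα : 0 < α) (u : ℕ → ℝ) (hu : IsSolution g1 g2 n h α u)
    (hgmono : StrictMonoOn (gg g1 g2) (Set.Ioi 0))
    (ginv : ℝ → ℝ)
    (hginv : ∀ y ∈ Set.Ioi (0:ℝ), ginv y ∈ Set.Ioi 0 ∧ gg g1 g2 (ginv y) = y) :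
    ginv α < u n := by
  have hg1 := strictMonoOn_Ici_zero_of_deriv_pos_s6 hg1C.continuous hg1d
  have hg2 := strictMonoOn_Ici_zero_of_deriv_pos_s6 hg2C.continuous hg2d
  have hun : 0 < u n := hu.1 n (by omega) le_rfl
  have hg2un : 0 < g2 (u n) := hg20 ▸ hg2 self_mem_Ici hun.le hun
  obtain ⟨hginvpos, hginvα⟩ := hginv α hα
  refine (hgmono.lt_iff_lt hginvpos hun).mp ?_
  rw [hginvα]
  exact hu.lt_gg hn hh hg1 hg10 hg2un

theorem stmt_6 (n : ℕ) (hn : 2 ≤ n) (h : ℝ) (hh : h = 1 / ((n : ℝ) - 1))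
    (g1 g2 : ℝ → ℝ)
    (hg1C : ContDiff ℝ 3 g1) (hg2C : ContDiff ℝ 3 g2)
    (hg10 : g1 0 = 0) (hg20 : g2 0 = 0)
    (hg1d : ∀ x > (0:ℝ), 0 < deriv g1 x) (hg2d : ∀ x > (0:ℝ), 0 < deriv g2 x)
    (hg1dd : ∀ x > (0:ℝ), 0 < deriv (deriv g1) x)
    (hg2dd : ∀ x > (0:ℝ), 0 < deriv (deriv g2) x)
    (hg1ddd : ∀ x > (0:ℝ), 0 ≤ deriv (deriv (deriv g1)) x)
    (hg2ddd : ∀ x > (0:ℝ), 0 ≤ deriv (deriv (deriv g2)) x)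
    (α : ℝ) (hα : 0 < α) (u : ℕ → ℝ) (hu : IsSolution g1 g2 n h α u)
    (hgmono : StrictMonoOn (gg g1 g2) (Set.Ioi 0))
    (hgbij : Set.BijOn (gg g1 g2) (Set.Ioi 0) (Set.Ioi 0))
    (ginv : ℝ → ℝ)
    (hginv : ∀ y ∈ Set.Ioi (0:ℝ), ginv y ∈ Set.Ioi 0 ∧ gg g1 g2 (ginv y) = y) :
    ginv α < u n :=
  stmt_6_general n hn h hh g1 g2 hg1C hg2C hg10 hg20 hg1d hg2d α hα u hu hgmono ginv hginv
end
end

section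
/- Let α > 0 and let (u₁,…,u_n) ∈ (0,∞)ⁿ be a positive solution of the discrete system (Sα). Then G(u_n) < G(u₁) + α²/2, where G := G₁/g₂². Moreover, if G is a strictly increasing bijection of (0,∞) onto (0,∞), then u_n < G⁻¹(G(u₁) + α²/2). -/
/-!
Multiplying the difference equation at node k by the sum of the two adjacent increments and
telescoping gives a discrete energy identity
`α² g₂(u_n)² = 2 T + (h²/4) (g₁(u_n)² − g₁(u₁)²)`, where `T` is the trapezoid rule for
`∫_{u₁}^{u_n} g₁` on the increasing nodes `u₁ < ⋯ < u_n`. Since `g₁` is convex the trapezoid rule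
overestimates the integral (Hermite–Hadamard), and since `g₁` is increasing the correction term is
nonnegative, so `G₁(u_n) − G₁(u₁) ≤ α² g₂(u_n)² / 2`. Dividing by `g₂(u_n)² > g₂(u₁)²` gives the
bound on `G`, and the bound on `u_n` follows because `G` is increasing.
-/

noncomputable section

theorem ConvexOn.apply_add_apply_reflect_le {f : ℝ → ℝ} {a b x : ℝ}
    (hf : ConvexOn ℝ (Set.Icc a b) f) (hx : x ∈ Set.Icc a b) :
    f x + f (a + b - x) ≤ f a + f b := by
  obtain ⟨hax, hxb⟩ := hx
  obtain rfl | hab := (hax.trans hxb).eq_or_lt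
  · obtain rfl : x = a := le_antisymm hxb hax
    simp
  have ha : a ∈ Set.Icc a b := Set.left_mem_Icc.2 hab.le
  have hb : b ∈ Set.Icc a b := Set.right_mem_Icc.2 hab.le
  set t := (x - a) / (b - a) with ht
  have ht0 : 0 ≤ t := div_nonneg (sub_nonneg.2 hax) (sub_pos.2 hab).le
  have ht1 : t ≤ 1 := (div_le_one (sub_pos.2 hab)).2 (by linarith)
  have hx := hf.2 ha hb (sub_nonneg.2 ht1) ht0 (sub_add_cancel 1 t)
  have hx' := hf.2 ha hb ht0 (sub_nonneg.2 ht1) (add_sub_cancel t 1)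
  have hxt : (1 - t) • a + t • b = x := by
    simp only [smul_eq_mul, ht]; field_simp; ring
  have hxt' : t • a + (1 - t) • b = a + b - x := by
    simp only [smul_eq_mul, ht]; field_simp; ring
  rw [hxt] at hx
  rw [hxt'] at hx'
  simp only [smul_eq_mul] at hx hx'
  linarith

theorem ConvexOn.intervalIntegral_le_trapezoid {f : ℝ → ℝ} {a b : ℝ} (hab : a ≤ b)
    (hcont : ContinuousOn f (Set.Icc a b)) (hf : ConvexOn ℝ (Set.Icc a b) f) :
    ∫ x in a..b, f x ≤ (f a + f b) / 2 * (b - a) := by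
  have hint : IntervalIntegrable f MeasureTheory.volume a b := hcont.intervalIntegrable_of_Icc hab
  have hint' : IntervalIntegrable (fun x ↦ f (a + b - x)) MeasureTheory.volume a b := by
    simpa using (hint.comp_sub_left (a + b)).symm
  have hreflect : ∫ x in a..b, f (a + b - x) = ∫ x in a..b, f x := by
    simp [intervalIntegral.integral_comp_sub_left]
  have hsum : ∫ x in a..b, (f x + f (a + b - x)) ≤ ∫ _ in a..b, (f a + f b) :=
    intervalIntegral.integral_mono_on hab (hint.add hint') intervalIntegrable_const
      fun x hx ↦ hf.apply_add_apply_reflect_le hx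
  rw [intervalIntegral.integral_add hint hint', hreflect, intervalIntegral.integral_const,
    smul_eq_mul] at hsum
  linarith

def trapezoidSum (f : ℝ → ℝ) (u : ℕ → ℝ) (n : ℕ) : ℝ :=
  ∑ k ∈ Finset.Ico 1 n, (f (u k) + f (u (k + 1))) / 2 * (u (k + 1) - u k)

theorem sq_sub_add_eq_trapezoidSum {f : ℝ → ℝ} {c : ℝ} {u : ℕ → ℝ} {n : ℕ} (hn : 2 ≤ n)
    (hu : ∀ k, 2 ≤ k → k < n → u (k + 1) - 2 * u k + u (k - 1) = c * f (u k)) :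
    (u n - u (n - 1)) ^ 2 + c * f (u n) * (u n - u (n - 1)) =
      (u 2 - u 1) ^ 2 - c * f (u 1) * (u 2 - u 1) + 2 * c * trapezoidSum f u n := by
  induction n, hn using Nat.le_induction with
  | base => simp [trapezoidSum]; ring
  | succ n hn ih =>
    have hstep := hu n hn (by omega)
    rw [trapezoidSum, Finset.sum_Ico_succ_top (by omega), ← trapezoidSum, Nat.add_sub_cancel]
    linear_combination ih (fun k hk hkn ↦ hu k hk (by omega)) +
      (u (n + 1) - u (n - 1)) * hstep

theorem lt_succ_of_sub_two_mul_add_pos {u : ℕ → ℝ} {n : ℕ} (h12 : u 1 < u 2)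
    (hu : ∀ k, 2 ≤ k → k < n → 0 < u (k + 1) - 2 * u k + u (k - 1)) :
    ∀ k, 1 ≤ k → k < n → u k < u (k + 1) := by
  intro k hk
  induction k, hk using Nat.le_induction with
  | base => exact fun _ ↦ h12
  | succ k hk ih =>
    intro hkn
    have := hu (k + 1) (by omega) hkn
    rw [Nat.add_sub_cancel] at this
    linarith [ih (by omega)]

theorem strictMonoOn_Icc_of_lt_succ {u : ℕ → ℝ} {m n : ℕ}
    (hu : ∀ k, m ≤ k → k < n → u k < u (k + 1)) : StrictMonoOn u (Set.Icc m n) :=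
  strictMonoOn_of_lt_succ Set.ordConnected_Icc fun k _ hk hk' ↦ hu k hk.1 (by simpa using hk'.2)

theorem ConvexOn.intervalIntegral_le_trapezoidSum {f : ℝ → ℝ} {s : Set ℝ} {u : ℕ → ℝ} {n : ℕ}
    (hn : 1 ≤ n) (hcont : ContinuousOn f s) (hf : ConvexOn ℝ s f)
    (hus : ∀ k, 1 ≤ k → k ≤ n → u k ∈ s) (hu : ∀ k, 1 ≤ k → k < n → u k ≤ u (k + 1)) :
    ∫ x in u 1..u n, f x ≤ trapezoidSum f u n := by
  have hint : ∀ k ∈ Set.Ico 1 n, IntervalIntegrable f MeasureTheory.volume (u k) (u (k + 1)) :=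
    fun k ⟨hk1, hkn⟩ ↦ (hcont.mono (hf.1.ordConnected.out (hus k hk1 hkn.le)
      (hus (k + 1) (by omega) hkn))).intervalIntegrable_of_Icc (hu k hk1 hkn)
  rw [← intervalIntegral.sum_integral_adjacent_intervals_Ico hn hint]
  refine Finset.sum_le_sum fun k hk ↦ ?_
  obtain ⟨hk1, hkn⟩ := Finset.mem_Ico.1 hk
  have hsub := hf.1.ordConnected.out (hus k hk1 hkn.le) (hus (k + 1) (by omega) hkn)
  exact (hf.subset hsub (convex_Icc _ _)).intervalIntegral_le_trapezoid (hu k hk1 hkn)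
    (hcont.mono hsub)

theorem pos_of_strictMonoOn_Ici {g : ℝ → ℝ} (hg : StrictMonoOn g (Set.Ici 0)) (hg0 : g 0 = 0)
    {x : ℝ} (hx : 0 < x) : 0 < g x :=
  hg0 ▸ hg Set.self_mem_Ici hx.le hx

theorem primG1_pos {g : ℝ → ℝ} (hgc : Continuous g) (hg : ∀ x > 0, 0 < g x) {x : ℝ}
    (hx : 0 < x) : 0 < primG1 g x :=
  intervalIntegral.intervalIntegral_pos_of_pos_on (hgc.intervalIntegrable _ _)
    (fun t ht ↦ hg t ht.1) hx

section IsSolution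

variable {g1 g2 : ℝ → ℝ} {n : ℕ} {h α : ℝ} {u : ℕ → ℝ}

theorem IsSolution.lt_succ (hu : IsSolution g1 g2 n h α u) (hn : 2 ≤ n) (hh : h ≠ 0)
    (hg1pos : ∀ x > 0, 0 < g1 x) : ∀ k, 1 ≤ k → k < n → u k < u (k + 1) := by
  obtain ⟨hpos, hfirst, hrec, -⟩ := hu
  refine lt_succ_of_sub_two_mul_add_pos ?_ fun k hk hkn ↦ ?_
  · have := hg1pos _ (hpos 1 le_rfl (by omega))
    have : 0 < h ^ 2 / 2 * g1 (u 1) := by positivity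
    linarith
  · rw [hrec k hk (by omega)]
    have := hg1pos _ (hpos k (by omega) hkn.le)
    positivity

theorem IsSolution.sq_mul_sq_eq (hu : IsSolution g1 g2 n h α u) (hn : 2 ≤ n) (hh : h ≠ 0) :
    α ^ 2 * g2 (u n) ^ 2 =
      2 * trapezoidSum g1 u n + h ^ 2 / 4 * (g1 (u n) ^ 2 - g1 (u 1) ^ 2) := by
  obtain ⟨-, hfirst, hrec, hlast⟩ := hu
  have henergy := sq_sub_add_eq_trapezoidSum hn fun k hk hkn ↦ hrec k hk (by omega)
  rw [hfirst, hlast] at henergy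
  apply mul_left_cancel₀ (pow_ne_zero 2 hh)
  linear_combination henergy

theorem IsSolution.one_lt (hu : IsSolution g1 g2 n h α u) (hn : 2 ≤ n) (hh : h ≠ 0)
    (hg1pos : ∀ x > 0, 0 < g1 x) : u 1 < u n :=
  strictMonoOn_Icc_of_lt_succ (hu.lt_succ hn hh hg1pos) ⟨le_rfl, by omega⟩ ⟨by omega, le_rfl⟩
    (by omega)

theorem IsSolution.integral_le (hu : IsSolution g1 g2 n h α u) (hn : 2 ≤ n) (hh : h ≠ 0)
    (hg1c : Continuous g1) (hg1 : MonotoneOn g1 (Set.Ici 0)) (hg1pos : ∀ x > 0, 0 < g1 x)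
    (hg1conv : ConvexOn ℝ (Set.Ici 0) g1) :
    ∫ x in u 1..u n, g1 x ≤ α ^ 2 * g2 (u n) ^ 2 / 2 := by
  have hu1 : 0 < u 1 := hu.1 1 le_rfl (by omega)
  have h1n : u 1 < u n := hu.one_lt hn hh hg1pos
  have htrap := hg1conv.intervalIntegral_le_trapezoidSum (by omega) hg1c.continuousOn
    (fun k hk hkn ↦ (hu.1 k hk hkn).le) fun k hk hkn ↦ (hu.lt_succ hn hh hg1pos k hk hkn).le
  have hg1le : g1 (u 1) ^ 2 ≤ g1 (u n) ^ 2 := pow_le_pow_left₀ (hg1pos _ hu1).le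
    (hg1 hu1.le (hu1.trans h1n).le h1n.le) 2
  have hcorr : 0 ≤ h ^ 2 / 4 * (g1 (u n) ^ 2 - g1 (u 1) ^ 2) :=
    mul_nonneg (by positivity) (sub_nonneg.2 hg1le)
  linarith [hu.sq_mul_sq_eq hn hh]

theorem IsSolution.GG_lt (hu : IsSolution g1 g2 n h α u) (hn : 2 ≤ n) (hh : h ≠ 0)
    (hg1c : Continuous g1) (hg1 : MonotoneOn g1 (Set.Ici 0)) (hg1pos : ∀ x > 0, 0 < g1 x)
    (hg1conv : ConvexOn ℝ (Set.Ici 0) g1) (hg2 : StrictMonoOn g2 (Set.Ici 0))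
    (hg2pos : ∀ x > 0, 0 < g2 x) :
    GG g1 g2 (u n) < GG g1 g2 (u 1) + α ^ 2 / 2 := by
  have hu1 : 0 < u 1 := hu.1 1 le_rfl (by omega)
  have h1n : u 1 < u n := hu.one_lt hn hh hg1pos
  have hg2u1 := hg2pos _ hu1
  have hg2lt : g2 (u 1) < g2 (u n) := hg2 hu1.le (hu1.trans h1n).le h1n
  have hG1n : primG1 g1 (u n) ≤ primG1 g1 (u 1) + α ^ 2 * g2 (u n) ^ 2 / 2 := by
    have hsplit : primG1 g1 (u n) - primG1 g1 (u 1) = ∫ x in u 1..u n, g1 x :=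
      intervalIntegral.integral_interval_sub_left (hg1c.intervalIntegrable 0 _)
        (hg1c.intervalIntegrable 0 _)
    linarith [hu.integral_le hn hh hg1c hg1 hg1pos hg1conv]
  have hG1 := primG1_pos hg1c hg1pos hu1
  calc GG g1 g2 (u n) ≤ (primG1 g1 (u 1) + α ^ 2 * g2 (u n) ^ 2 / 2) / g2 (u n) ^ 2 := by
        unfold GG; gcongr
    _ = primG1 g1 (u 1) / g2 (u n) ^ 2 + α ^ 2 / 2 := by
        field_simp [(hg2u1.trans hg2lt).ne']
    _ < GG g1 g2 (u 1) + α ^ 2 / 2 := by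
        unfold GG; gcongr

end IsSolution

theorem stmt_9_general (n : ℕ) (hn : 2 ≤ n) (h : ℝ) (hh : h = 1 / ((n : ℝ) - 1))
    (g1 g2 : ℝ → ℝ)
    (hg1C : ContDiff ℝ 3 g1) (hg2C : ContDiff ℝ 3 g2)
    (hg10 : g1 0 = 0) (hg20 : g2 0 = 0)
    (hg1d : ∀ x > (0:ℝ), 0 < deriv g1 x) (hg2d : ∀ x > (0:ℝ), 0 < deriv g2 x)
    (hg1dd : ∀ x > (0:ℝ), 0 < deriv (deriv g1) x)
    (α : ℝ) (u : ℕ → ℝ) (hu : IsSolution g1 g2 n h α u) :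
    GG g1 g2 (u n) < GG g1 g2 (u 1) + α ^ 2 / 2 ∧
    (∀ Ginv : ℝ → ℝ,
      StrictMonoOn (GG g1 g2) (Set.Ioi 0) →
      Set.BijOn (GG g1 g2) (Set.Ioi 0) (Set.Ioi 0) →
      (∀ y ∈ Set.Ioi (0:ℝ), Ginv y ∈ Set.Ioi 0 ∧ GG g1 g2 (Ginv y) = y) →
      u n < Ginv (GG g1 g2 (u 1) + α ^ 2 / 2)) := by
  have hh0 : h ≠ 0 := by
    have : (2 : ℝ) ≤ n := by exact_mod_cast hn
    rw [hh]
    exact one_div_ne_zero (by linarith)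
  have hg1 : StrictMonoOn g1 (Set.Ici 0) := strictMonoOn_of_deriv_pos (convex_Ici 0)
    hg1C.continuous.continuousOn (by simpa using hg1d)
  have hg2 : StrictMonoOn g2 (Set.Ici 0) := strictMonoOn_of_deriv_pos (convex_Ici 0)
    hg2C.continuous.continuousOn (by simpa using hg2d)
  have hg1conv : ConvexOn ℝ (Set.Ici 0) g1 := (strictConvexOn_of_deriv2_pos (convex_Ici 0)
    hg1C.continuous.continuousOn (by simpa using hg1dd)).convexOn
  have hg1pos : ∀ x > 0, 0 < g1 x := fun _ ↦ pos_of_strictMonoOn_Ici hg1 hg10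
  have hg2pos : ∀ x > 0, 0 < g2 x := fun _ ↦ pos_of_strictMonoOn_Ici hg2 hg20
  have hGG := hu.GG_lt hn hh0 hg1C.continuous hg1.monotoneOn hg1pos hg1conv hg2 hg2pos
  refine ⟨hGG, fun Ginv hGmono _ hGinv ↦ ?_⟩
  have hu1 : 0 < u 1 := hu.1 1 le_rfl (by omega)
  have hGG1 : 0 < GG g1 g2 (u 1) := div_pos (primG1_pos hg1C.continuous hg1pos hu1)
    (pow_pos (hg2pos _ hu1) 2)
  obtain ⟨hpos, hinv⟩ := hGinv _ (show 0 < GG g1 g2 (u 1) + α ^ 2 / 2 by positivity)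
  exact (hGmono.lt_iff_lt (hu.1 n (by omega) le_rfl) hpos).1 (by rwa [hinv])

theorem stmt_9 (n : ℕ) (hn : 2 ≤ n) (h : ℝ) (hh : h = 1 / ((n : ℝ) - 1))
    (g1 g2 : ℝ → ℝ)
    (hg1C : ContDiff ℝ 3 g1) (hg2C : ContDiff ℝ 3 g2)
    (hg10 : g1 0 = 0) (hg20 : g2 0 = 0)
    (hg1d : ∀ x > (0:ℝ), 0 < deriv g1 x) (hg2d : ∀ x > (0:ℝ), 0 < deriv g2 x)
    (hg1dd : ∀ x > (0:ℝ), 0 < deriv (deriv g1) x)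
    (hg2dd : ∀ x > (0:ℝ), 0 < deriv (deriv g2) x)
    (hg1ddd : ∀ x > (0:ℝ), 0 ≤ deriv (deriv (deriv g1)) x)
    (hg2ddd : ∀ x > (0:ℝ), 0 ≤ deriv (deriv (deriv g2)) x)
    (α : ℝ) (hα : 0 < α) (u : ℕ → ℝ) (hu : IsSolution g1 g2 n h α u) :
    GG g1 g2 (u n) < GG g1 g2 (u 1) + α ^ 2 / 2 ∧
    (∀ Ginv : ℝ → ℝ,
      StrictMonoOn (GG g1 g2) (Set.Ioi 0) →
      Set.BijOn (GG g1 g2) (Set.Ioi 0) (Set.Ioi 0) →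
      (∀ y ∈ Set.Ioi (0:ℝ), Ginv y ∈ Set.Ioi 0 ∧ GG g1 g2 (Ginv y) = y) →
      u n < Ginv (GG g1 g2 (u 1) + α ^ 2 / 2)) :=
  stmt_9_general n hn h hh g1 g2 hg1C hg2C hg10 hg20 hg1d hg2d hg1dd α u hu
end
end
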